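/- arXiv:1606.06275 — 11 statements merged into one kernel-verified Lean document; each statement's English description precedes it below -/
import Mathlib

section
/- Let (P, L) be a partial geometry with parameters (s, t, α) and let f : P → ℝ be a zero-sum weighting, i.e., the sum of f over all points is 0. Define the weight of a line ℓ as the sum of f over the points on ℓ. Then for any line ℓ, (t−α)·wt(ℓ) equals the sum of wt(m) over all lines m ≠ ℓ that meet ℓ in a point. -/
open scoped Classical BigOperators

/-- A partial geometry with parameters `(s, t, α)`: lines are finsets of points,
every line has `s+1` points, every point lies on `t+1` lines, two distinct points
lie on at most one common line, and for every line `ℓ` and point `p ∉ ℓ` exactly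
`α` lines through `p` meet `ℓ`. -/
structure PartialGeometry (P : Type*) [Fintype P] [DecidableEq P] (s t α : ℕ) where
  lines : Finset (Finset P)
  line_size : ∀ ℓ ∈ lines, ℓ.card = s + 1
  point_deg : ∀ p : P, (lines.filter (fun ℓ => p ∈ ℓ)).card = t + 1
  two_points : ∀ p q : P, p ≠ q → (lines.filter (fun ℓ => p ∈ ℓ ∧ q ∈ ℓ)).card ≤ 1
  alpha_eq : ∀ ℓ ∈ lines, ∀ p : P, p ∉ ℓ →
      (lines.filter (fun m => p ∈ m ∧ ∃ q ∈ m, q ∈ ℓ)).card = α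

/-- For any zero-sum weighting and any line ℓ, (t−α)·wt(ℓ) equals the sum of the
weights of the lines m ≠ ℓ meeting ℓ. -/
theorem partialGeometry_eigenvalue_identity {P : Type*} [Fintype P] [DecidableEq P]
    {s t α : ℕ} (G : PartialGeometry P s t α)
    (f : P → ℝ) (hf : ∑ p, f p = 0)
    (ℓ : Finset P) (hℓ : ℓ ∈ G.lines) :
    ((t : ℝ) - α) * (∑ p ∈ ℓ, f p) =
      ∑ m ∈ G.lines.filter (fun m => m ≠ ℓ ∧ ∃ q ∈ m, q ∈ ℓ), ∑ p ∈ m, f p := by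
  classical
  set A := G.lines.filter (fun m => m ≠ ℓ ∧ ∃ q ∈ m, q ∈ ℓ) with hA
  have key : ∑ m ∈ A, ∑ p ∈ m, f p
      = ∑ p : P, ((A.filter (fun m => p ∈ m)).card : ℝ) * f p := by
    have : ∀ m ∈ A, ∑ p ∈ m, f p = ∑ p : P, if p ∈ m then f p else 0 := by
      intro m _
      rw [Finset.sum_ite_mem, Finset.univ_inter]
    rw [Finset.sum_congr rfl this, Finset.sum_comm]
    refine Finset.sum_congr rfl fun p _ => ?_
    rw [Finset.sum_ite, Finset.sum_const_zero, add_zero, Finset.sum_const,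
      nsmul_eq_mul]
  have cardin : ∀ p ∈ ℓ, (A.filter (fun m => p ∈ m)).card = t := by
    intro p hp
    have heq : A.filter (fun m => p ∈ m)
        = (G.lines.filter (fun m => p ∈ m)).erase ℓ := by
      ext m
      simp only [hA, Finset.mem_filter, Finset.mem_erase]
      constructor
      · rintro ⟨⟨hm, hne, -⟩, hpm⟩
        exact ⟨hne, hm, hpm⟩
      · rintro ⟨hne, hm, hpm⟩
        exact ⟨⟨hm, hne, ⟨p, hpm, hp⟩⟩, hpm⟩
    rw [heq, Finset.card_erase_of_mem (by simp [Finset.mem_filter, hℓ, hp]),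
      G.point_deg p]
    rfl
  have cardout : ∀ p ∉ ℓ, (A.filter (fun m => p ∈ m)).card = α := by
    intro p hp
    have heq : A.filter (fun m => p ∈ m)
        = G.lines.filter (fun m => p ∈ m ∧ ∃ q ∈ m, q ∈ ℓ) := by
      ext m
      simp only [hA, Finset.mem_filter]
      constructor
      · rintro ⟨⟨hm, -, hmeet⟩, hpm⟩
        exact ⟨hm, hpm, hmeet⟩
      · rintro ⟨hm, hpm, hmeet⟩
        exact ⟨⟨hm, fun h => hp (h ▸ hpm), hmeet⟩, hpm⟩
    rw [heq, G.alpha_eq ℓ hℓ p hp]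
  have split : ∑ p : P, ((A.filter (fun m => p ∈ m)).card : ℝ) * f p
      = ∑ p ∈ ℓ, (t : ℝ) * f p + ∑ p ∈ ℓᶜ, (α : ℝ) * f p := by
    rw [← Finset.sum_add_sum_compl ℓ]
    congr 1
    · exact Finset.sum_congr rfl fun p hp => by rw [cardin p hp]
    · exact Finset.sum_congr rfl fun p hp => by
        rw [cardout p (by simpa using hp)]
  have hcompl : ∑ p ∈ ℓᶜ, f p = - ∑ p ∈ ℓ, f p := by
    have := Finset.sum_add_sum_compl ℓ f
    linarith [this.trans hf]
  rw [key, split, ← Finset.mul_sum, ← Finset.mul_sum, hcompl]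
  ring
end

section
/- In a partial geometry with a zero-sum weighting scaled so that the maximum line weight is 1, assume t+1 > α and that at most t lines have nonnegative weight. If P denotes the sum of the weights of the nonnegative lines, then t − α + 1 < P ≤ t. -/
open scoped Classical BigOperators

/-- If the max line weight is 1, t + 1 > α, and at most t lines are nonnegative,
then the sum P of the weights of the nonnegative lines satisfies t − α + 1 < P ≤ t. -/
theorem sum_nonneg_line_weights_bounds {P : Type*} [Fintype P] [DecidableEq P]
    {s t α : ℕ} (G : PartialGeometry P s t α)
    (f : P → ℝ) (hf : ∑ p, f p = 0)
    (hmax : ∀ ℓ ∈ G.lines, ∑ p ∈ ℓ, f p ≤ 1)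
    (hone : ∃ ℓ ∈ G.lines, ∑ p ∈ ℓ, f p = 1)
    (htα : α < t + 1)
    (hfew : (G.lines.filter (fun ℓ => 0 ≤ ∑ p ∈ ℓ, f p)).card ≤ t) :
    (t : ℝ) - α + 1 <
        ∑ ℓ ∈ G.lines.filter (fun ℓ => 0 ≤ ∑ p ∈ ℓ, f p), ∑ p ∈ ℓ, f p ∧
      ∑ ℓ ∈ G.lines.filter (fun ℓ => 0 ≤ ∑ p ∈ ℓ, f p), ∑ p ∈ ℓ, f p ≤ (t : ℝ) := by
  obtain ⟨ℓ₀, hℓ₀, hw₀⟩ := hone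
  set S : Finset (Finset P) := G.lines.filter (fun ℓ => 0 ≤ ∑ p ∈ ℓ, f p) with hSdef
  have hℓ₀S : ℓ₀ ∈ S := Finset.mem_filter.mpr ⟨hℓ₀, by rw [hw₀]; norm_num⟩
  -- upper bound
  have hupper : ∑ ℓ ∈ S, ∑ p ∈ ℓ, f p ≤ (t : ℝ) := by
    calc ∑ ℓ ∈ S, ∑ p ∈ ℓ, f p ≤ ∑ _ℓ ∈ S, (1 : ℝ) :=
          Finset.sum_le_sum (fun ℓ hℓ => hmax ℓ (Finset.mem_filter.mp hℓ).1)
      _ = S.card := by simp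
      _ ≤ t := by exact_mod_cast hfew
  refine ⟨?_, hupper⟩
  -- the set of lines meeting ℓ₀, other than ℓ₀
  set M : Finset (Finset P) :=
    G.lines.filter (fun m => m ≠ ℓ₀ ∧ ∃ q ∈ m, q ∈ ℓ₀) with hMdef
  -- counting identity: sum of weights of lines meeting ℓ₀ equals t - α
  have hMsum : ∑ m ∈ M, ∑ p ∈ m, f p = (t : ℝ) - α := by
    have key : ∀ p : P,
        ((M.filter (fun m => p ∈ m)).card : ℝ) = if p ∈ ℓ₀ then (t : ℝ) else (α : ℝ) := by
      intro p
      by_cases hp : p ∈ ℓ₀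
      · have hset : M.filter (fun m => p ∈ m) = (G.lines.filter (fun m => p ∈ m)).erase ℓ₀ := by
          ext m
          simp only [hMdef, Finset.mem_filter, Finset.mem_erase]
          constructor
          · rintro ⟨⟨hm, hne, _⟩, hpm⟩; exact ⟨hne, hm, hpm⟩
          · rintro ⟨hne, hm, hpm⟩; exact ⟨⟨hm, hne, ⟨p, hpm, hp⟩⟩, hpm⟩
        rw [hset, Finset.card_erase_of_mem (Finset.mem_filter.mpr ⟨hℓ₀, hp⟩), G.point_deg p]
        simp [hp]
      · have hset : M.filter (fun m => p ∈ m)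
            = G.lines.filter (fun m => p ∈ m ∧ ∃ q ∈ m, q ∈ ℓ₀) := by
          ext m
          simp only [hMdef, Finset.mem_filter]
          constructor
          · rintro ⟨⟨hm, _, hq⟩, hpm⟩; exact ⟨hm, hpm, hq⟩
          · rintro ⟨hm, hpm, hq⟩
            refine ⟨⟨hm, ?_, hq⟩, hpm⟩
            rintro rfl; exact hp hpm
        rw [hset, G.alpha_eq ℓ₀ hℓ₀ p hp]
        simp [hp]
    calc ∑ m ∈ M, ∑ p ∈ m, f p
        = ∑ m ∈ M, ∑ p : P, if p ∈ m then f p else 0 := by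
          refine Finset.sum_congr rfl fun m _ => ?_
          rw [Finset.sum_ite_mem, Finset.univ_inter]
      _ = ∑ p : P, ∑ m ∈ M, if p ∈ m then f p else 0 := Finset.sum_comm
      _ = ∑ p : P, ((M.filter (fun m => p ∈ m)).card : ℝ) * f p := by
          refine Finset.sum_congr rfl fun p _ => ?_
          rw [Finset.sum_ite, Finset.sum_const, Finset.sum_const_zero, add_zero, nsmul_eq_mul]
      _ = ∑ p : P, (if p ∈ ℓ₀ then (t : ℝ) else (α : ℝ)) * f p := by
          refine Finset.sum_congr rfl fun p _ => ?_; rw [key p]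
      _ = (t : ℝ) - α := by
          have hsplit : ∀ p : P, (if p ∈ ℓ₀ then (t : ℝ) else (α : ℝ)) * f p
              = (α : ℝ) * f p + (if p ∈ ℓ₀ then ((t : ℝ) - α) * f p else 0) := by
            intro p; by_cases h : p ∈ ℓ₀ <;> simp [h] <;> ring
          simp_rw [hsplit]
          rw [Finset.sum_add_distrib, ← Finset.mul_sum, hf,
            Finset.sum_ite_mem, Finset.univ_inter, ← Finset.mul_sum, hw₀]
          ring
  -- a point of ℓ₀
  obtain ⟨q, hq⟩ : ℓ₀.Nonempty := by
    rw [← Finset.card_pos, G.line_size ℓ₀ hℓ₀]; omega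
  -- a negative line through q
  obtain ⟨m₁, hm₁T, hm₁S⟩ :
      ∃ m ∈ G.lines.filter (fun m => q ∈ m), m ∉ S := by
    by_contra h
    push_neg at h
    have hsub : G.lines.filter (fun m => q ∈ m) ⊆ S := fun m hm => h m hm
    have := Finset.card_le_card hsub
    rw [G.point_deg q] at this
    omega
  obtain ⟨hm₁lines, hm₁q⟩ := Finset.mem_filter.mp hm₁T
  have hm₁neg : ¬ (0 ≤ ∑ p ∈ m₁, f p) := by
    intro h; exact hm₁S (Finset.mem_filter.mpr ⟨hm₁lines, h⟩)
  have hm₁ne : m₁ ≠ ℓ₀ := by rintro rfl; rw [hw₀] at hm₁neg; exact hm₁neg one_pos.le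
  have hm₁M : m₁ ∈ M := Finset.mem_filter.mpr ⟨hm₁lines, hm₁ne, ⟨q, hm₁q, hq⟩⟩
  -- split M into nonnegative and negative parts
  set Mpos := M.filter (fun m => 0 ≤ ∑ p ∈ m, f p) with hMpos
  set Mneg := M.filter (fun m => ¬ 0 ≤ ∑ p ∈ m, f p) with hMneg
  have hMsplit : ∑ m ∈ Mpos, ∑ p ∈ m, f p + ∑ m ∈ Mneg, ∑ p ∈ m, f p
      = (t : ℝ) - α := by
    rw [Finset.sum_filter_add_sum_filter_not]; exact hMsum
  have hnegsum : ∑ m ∈ Mneg, ∑ p ∈ m, f p < 0 := by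
    refine Finset.sum_neg (fun m hm => ?_) ⟨m₁, Finset.mem_filter.mpr ⟨hm₁M, hm₁neg⟩⟩
    exact lt_of_not_ge (Finset.mem_filter.mp hm).2
  have hpos_gt : (t : ℝ) - α < ∑ m ∈ Mpos, ∑ p ∈ m, f p := by linarith
  -- Mpos ⊆ S.erase ℓ₀
  have hsub : Mpos ⊆ S.erase ℓ₀ := by
    intro m hm
    obtain ⟨hmM, hmw⟩ := Finset.mem_filter.mp hm
    obtain ⟨hmlines, hmne, _⟩ := Finset.mem_filter.mp hmM
    exact Finset.mem_erase.mpr ⟨hmne, Finset.mem_filter.mpr ⟨hmlines, hmw⟩⟩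
  have herase : ∑ m ∈ Mpos, ∑ p ∈ m, f p ≤ ∑ m ∈ S.erase ℓ₀, ∑ p ∈ m, f p := by
    refine Finset.sum_le_sum_of_subset_of_nonneg hsub (fun m hm _ => ?_)
    exact (Finset.mem_filter.mp (Finset.mem_of_mem_erase hm)).2
  have hSsum : ∑ m ∈ S, ∑ p ∈ m, f p
      = 1 + ∑ m ∈ S.erase ℓ₀, ∑ p ∈ m, f p := by
    rw [← hw₀]
    exact (Finset.add_sum_erase S (fun m => ∑ p ∈ m, f p) hℓ₀S).symm
  rw [hSsum]
  linarith
end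

section
/- In a partial geometry with a zero-sum weighting in which the maximum line weight is 1, if ℓ is a nonnegative line whose weight is maximal among all lines adjacent to it, then ℓ is adjacent to at least t − α + 1 lines of nonnegative weight. -/
open scoped Classical BigOperators

/-- If ℓ is a nonnegative line whose weight is maximal among its neighbours, then
ℓ is adjacent to at least t − α + 1 nonnegative lines. -/
theorem nonneg_local_max_many_nonneg_neighbours {P : Type*} [Fintype P] [DecidableEq P]
    {s t α : ℕ} (G : PartialGeometry P s t α) (htα : α < t)
    (f : P → ℝ) (hf : ∑ p, f p = 0)
    (hmax : ∀ m ∈ G.lines, ∑ p ∈ m, f p ≤ 1)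
    (ℓ : Finset P) (hℓ : ℓ ∈ G.lines) (hℓ0 : 0 ≤ ∑ p ∈ ℓ, f p)
    (hloc : ∀ m ∈ G.lines, (∃ q ∈ m, q ∈ ℓ) → ∑ p ∈ m, f p ≤ ∑ p ∈ ℓ, f p) :
    (t : ℤ) - α + 1 ≤
      ((G.lines.filter (fun m => m ≠ ℓ ∧ (∃ q ∈ m, q ∈ ℓ) ∧ 0 ≤ ∑ p ∈ m, f p)).card : ℤ) := by
  classical
  by_contra hcon
  push_neg at hcon
  set w := ∑ p ∈ ℓ, f p with hw
  set T := G.lines.filter (fun m => m ≠ ℓ ∧ ∃ q ∈ m, q ∈ ℓ) with hTdef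
  set A := G.lines.filter (fun m => m ≠ ℓ ∧ (∃ q ∈ m, q ∈ ℓ) ∧ 0 ≤ ∑ p ∈ m, f p) with hAdef
  have hAsubT : A ⊆ T := by
    intro m hm
    simp only [hAdef, hTdef, Finset.mem_filter] at hm ⊢
    exact ⟨hm.1, hm.2.1, hm.2.2.1⟩
  -- counts of lines of T through a point
  have hcount_in : ∀ p ∈ ℓ, (T.filter (fun m => p ∈ m)).card = t := by
    intro p hp
    have heq : T.filter (fun m => p ∈ m)
        = (G.lines.filter (fun m => p ∈ m)).erase ℓ := by
      ext m
      simp only [hTdef, Finset.mem_filter, Finset.mem_erase]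
      constructor
      · rintro ⟨⟨hm, hne, -⟩, hpm⟩
        exact ⟨hne, hm, hpm⟩
      · rintro ⟨hne, hm, hpm⟩
        exact ⟨⟨hm, hne, ⟨p, hpm, hp⟩⟩, hpm⟩
    rw [heq, Finset.card_erase_of_mem (by simp [hℓ, hp]), G.point_deg p]
    simp
  have hcount_out : ∀ p ∉ ℓ, (T.filter (fun m => p ∈ m)).card = α := by
    intro p hp
    have heq : T.filter (fun m => p ∈ m)
        = G.lines.filter (fun m => p ∈ m ∧ ∃ q ∈ m, q ∈ ℓ) := by
      ext m
      simp only [hTdef, Finset.mem_filter]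
      constructor
      · rintro ⟨⟨hm, -, hq⟩, hpm⟩
        exact ⟨hm, hpm, hq⟩
      · rintro ⟨hm, hpm, hq⟩
        refine ⟨⟨hm, ?_, hq⟩, hpm⟩
        rintro rfl
        exact hp hpm
    rw [heq, G.alpha_eq ℓ hℓ p hp]
  -- the key identity
  have key : ∑ m ∈ T, ∑ p ∈ m, f p = ((t : ℝ) - α) * w := by
    have h1 : ∀ m : Finset P, ∑ p ∈ m, f p = ∑ p : P, if p ∈ m then f p else 0 := by
      intro m
      rw [Finset.sum_ite_mem, Finset.univ_inter]
    calc ∑ m ∈ T, ∑ p ∈ m, f p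
        = ∑ m ∈ T, ∑ p : P, if p ∈ m then f p else 0 := by
          exact Finset.sum_congr rfl fun m _ => h1 m
      _ = ∑ p : P, ∑ m ∈ T, if p ∈ m then f p else 0 := Finset.sum_comm
      _ = ∑ p : P, ((T.filter (fun m => p ∈ m)).card : ℝ) * f p := by
          refine Finset.sum_congr rfl fun p _ => ?_
          rw [Finset.sum_ite, Finset.sum_const, Finset.sum_const_zero, add_zero,
            nsmul_eq_mul]
      _ = (∑ p ∈ ℓ, ((T.filter (fun m => p ∈ m)).card : ℝ) * f p)
          + ∑ p ∈ ℓᶜ, ((T.filter (fun m => p ∈ m)).card : ℝ) * f p := by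
          rw [Finset.sum_add_sum_compl]
      _ = (∑ p ∈ ℓ, (t : ℝ) * f p) + ∑ p ∈ ℓᶜ, (α : ℝ) * f p := by
          congr 1
          · exact Finset.sum_congr rfl fun p hp => by rw [hcount_in p hp]
          · exact Finset.sum_congr rfl fun p hp => by
              rw [hcount_out p (Finset.mem_compl.mp hp)]
      _ = (t : ℝ) * w + (α : ℝ) * ∑ p ∈ ℓᶜ, f p := by
          rw [← Finset.mul_sum, ← Finset.mul_sum]
      _ = ((t : ℝ) - α) * w := by
          have hc : w + ∑ p ∈ ℓᶜ, f p = 0 := by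
            rw [hw, Finset.sum_add_sum_compl, hf]
          have : ∑ p ∈ ℓᶜ, f p = -w := by linarith
          rw [this]; ring
  -- some point of ℓ
  obtain ⟨p0, hp0⟩ : ℓ.Nonempty := by
    rw [← Finset.card_pos, G.line_size ℓ hℓ]; omega
  -- α ≥ 1
  have ht1 : 1 ≤ t := by omega
  have hα1 : 1 ≤ α := by
    -- find a line m ≠ ℓ through p0
    have hdeg := G.point_deg p0
    have : ((G.lines.filter (fun m => p0 ∈ m)).erase ℓ).Nonempty := by
      rw [← Finset.card_pos, Finset.card_erase_of_mem (by simp [hℓ, hp0]), hdeg]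
      omega
    obtain ⟨m, hm⟩ := this
    rw [Finset.mem_erase, Finset.mem_filter] at hm
    obtain ⟨hmne, hml, hp0m⟩ := hm
    -- m ⊄ ℓ
    have : ¬ m ⊆ ℓ := by
      intro hsub
      exact hmne (Finset.eq_of_subset_of_card_le hsub
        (by rw [G.line_size ℓ hℓ, G.line_size m hml]))
    obtain ⟨q, hqm, hqℓ⟩ := Finset.not_subset.mp this
    have hcard := G.alpha_eq ℓ hℓ q hqℓ
    have : m ∈ G.lines.filter (fun m => q ∈ m ∧ ∃ r ∈ m, r ∈ ℓ) := by
      simp only [Finset.mem_filter]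
      exact ⟨hml, hqm, ⟨p0, hp0m, hp0⟩⟩
    have := Finset.card_pos.mpr ⟨m, this⟩
    omega
  -- |T| ≥ t
  have hTcard : t ≤ T.card := by
    rw [← hcount_in p0 hp0]
    exact Finset.card_le_card (Finset.filter_subset _ _)
  -- A.card ≤ t - α
  have hAle : (A.card : ℤ) ≤ (t : ℤ) - α := by omega
  have hAleR : (A.card : ℝ) ≤ (t : ℝ) - α := by exact_mod_cast hAle
  -- sum over A bounded above
  have hsumA : ∑ m ∈ A, ∑ p ∈ m, f p ≤ (A.card : ℝ) * w := by
    rw [← nsmul_eq_mul]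
    refine Finset.sum_le_card_nsmul _ _ _ fun m hm => ?_
    simp only [hAdef, Finset.mem_filter] at hm
    exact hloc m hm.1 hm.2.2.1
  -- negative part
  have hsplit : ∑ m ∈ T \ A, ∑ p ∈ m, f p + ∑ m ∈ A, ∑ p ∈ m, f p
      = ∑ m ∈ T, ∑ p ∈ m, f p := Finset.sum_sdiff hAsubT
  have hBneg : ∀ m ∈ T \ A, ∑ p ∈ m, f p < 0 := by
    intro m hm
    rw [Finset.mem_sdiff] at hm
    obtain ⟨hmT, hmA⟩ := hm
    simp only [hTdef, Finset.mem_filter] at hmT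
    simp only [hAdef, Finset.mem_filter] at hmA
    by_contra h
    push_neg at h
    exact hmA ⟨hmT.1, hmT.2.1, hmT.2.2, h⟩
  have hBnonneg : 0 ≤ ∑ m ∈ T \ A, ∑ p ∈ m, f p := by
    have h1 : ((t : ℝ) - α) * w ≤ ((t : ℝ) - α) * w := le_refl _
    have h2 : (A.card : ℝ) * w ≤ ((t : ℝ) - α) * w :=
      mul_le_mul_of_nonneg_right hAleR hℓ0
    nlinarith [hsumA, hsplit, key]
  have hBempty : T \ A = ∅ := by
    by_contra hne
    obtain ⟨m, hm⟩ := Finset.nonempty_of_ne_empty hne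
    have : ∑ m ∈ T \ A, ∑ p ∈ m, f p < ∑ m ∈ T \ A, (0 : ℝ) :=
      Finset.sum_lt_sum_of_nonempty ⟨m, hm⟩ hBneg
    rw [Finset.sum_const_zero] at this
    linarith
  have hTA : T ⊆ A := by
    intro m hm
    by_contra hmA
    have : m ∈ T \ A := Finset.mem_sdiff.mpr ⟨hm, hmA⟩
    rw [hBempty] at this
    exact absurd this (Finset.notMem_empty m)
  have := Finset.card_le_card hTA
  omega
end

section
/- Under a zero-sum weighting of a partial geometry with parameters (s, t, α), scaled so that the maximum line weight is 1, and assuming t > sα + 3α − 4, α > 1, and at most t lines have nonnegative weight: if ℓ₁ and ℓ₂ are the lines of highest and second-highest weight, then ℓ₁ and ℓ₂ meet in a point. -/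
open scoped Classical BigOperators

/-!
Suppose `ℓ₁` and `ℓ₂` are disjoint. Summing the point weights over the `(s+1)t` lines meeting a
line `ℓ` counts points of `ℓ` `t` times and all other points `α` times, so by the zero-sum
condition this sum is `(t - α) wt(ℓ)`. Since `ℓ₁`, `ℓ₂` and their nonnegative neighbours are
among the at most `t` nonnegative lines, each `ℓᵢ` has a negative neighbour; as its nonnegative
neighbours weigh at most `wt(ℓᵢ)`, more than `t - α` of them exist. Two disjoint lines have at
most `(s+1)α` common neighbours, so at least `2(t - α + 1) - (s+1)α + 2` lines are nonnegative,
which exceeds `t` when `t > sα + 3α - 4`.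
-/

open Finset

theorem Finset.sum_lt_card_filter_nonneg_mul {ι : Type*} {N : Finset ι} {w : ι → ℝ} {M : ℝ}
    (hM : ∀ m ∈ N, 0 ≤ w m → w m ≤ M) (hN : #(N.filter (0 ≤ w ·)) < #N) :
    ∑ m ∈ N, w m < #(N.filter (0 ≤ w ·)) * M := by
  rw [← sum_filter_add_sum_filter_not N (0 ≤ w ·)]
  have hle : ∑ m ∈ N.filter (0 ≤ w ·), w m ≤ #(N.filter (0 ≤ w ·)) * M := by
    simpa using sum_le_card_nsmul _ w M fun m hm => hM m (mem_filter.1 hm).1 (mem_filter.1 hm).2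
  have hneg : (N.filter (¬0 ≤ w ·)).Nonempty := by
    rw [← card_pos, filter_not, card_sdiff_of_subset (filter_subset _ _)]
    omega
  have hlt : ∑ m ∈ N.filter (¬0 ≤ w ·), w m < 0 :=
    sum_neg (fun m hm => not_le.1 (mem_filter.1 hm).2) hneg
  linarith

namespace PartialGeometry

variable {P : Type*} [Fintype P] [DecidableEq P] {s t α : ℕ} (G : PartialGeometry P s t α)

theorem eq_of_mem_of_mem {ℓ m : Finset P} (hℓ : ℓ ∈ G.lines) (hm : m ∈ G.lines) {p q : P}
    (hpq : p ≠ q) (hpℓ : p ∈ ℓ) (hqℓ : q ∈ ℓ) (hpm : p ∈ m) (hqm : q ∈ m) : ℓ = m :=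
  card_le_one.1 (G.two_points p q hpq) ℓ (mem_filter.2 ⟨hℓ, hpℓ, hqℓ⟩) m
    (mem_filter.2 ⟨hm, hpm, hqm⟩)

noncomputable def neighbors (ℓ : Finset P) : Finset (Finset P) :=
  G.lines.filter fun m => m ≠ ℓ ∧ (m ∩ ℓ).Nonempty

variable {G}

theorem mem_neighbors {ℓ m : Finset P} :
    m ∈ G.neighbors ℓ ↔ m ∈ G.lines ∧ m ≠ ℓ ∧ (m ∩ ℓ).Nonempty :=
  mem_filter

theorem neighbors_subset (ℓ : Finset P) : G.neighbors ℓ ⊆ G.lines :=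
  filter_subset _ _

theorem self_notMem_neighbors (ℓ : Finset P) : ℓ ∉ G.neighbors ℓ :=
  fun h => (mem_neighbors.1 h).2.1 rfl

theorem notMem_neighbors_of_disjoint {ℓ m : Finset P} (h : Disjoint ℓ m) : m ∉ G.neighbors ℓ :=
  fun hm => not_disjoint_iff_nonempty_inter.2 (mem_neighbors.1 hm).2.2 h.symm

theorem card_neighbors {ℓ : Finset P} (hℓ : ℓ ∈ G.lines) : #(G.neighbors ℓ) = (s + 1) * t := by
  have hbiUnion : G.neighbors ℓ = ℓ.biUnion fun p => (G.lines.filter (p ∈ ·)).erase ℓ := by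
    ext m
    simp only [mem_neighbors, mem_biUnion, mem_erase, mem_filter, Finset.Nonempty, mem_inter]
    aesop
  rw [hbiUnion, card_biUnion, ← G.line_size ℓ hℓ, card_eq_sum_ones, sum_mul, one_mul]
  · refine sum_congr rfl fun p hp => ?_
    rw [card_erase_of_mem (mem_filter.2 ⟨hℓ, hp⟩), G.point_deg p, Nat.add_sub_cancel]
  · intro p hp q hq hpq
    refine disjoint_left.2 fun m hm hm' => ?_
    simp only [mem_erase, mem_filter] at hm hm'
    exact hm.1 (G.eq_of_mem_of_mem hm.2.1 hℓ hpq hm.2.2 hm'.2.2 hp hq)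

theorem card_neighbors_filter_mem {ℓ : Finset P} (hℓ : ℓ ∈ G.lines) (q : P) :
    #((G.neighbors ℓ).filter (q ∈ ·)) = if q ∈ ℓ then t else α := by
  split_ifs with hq
  · have h : (G.neighbors ℓ).filter (q ∈ ·) = (G.lines.filter (q ∈ ·)).erase ℓ := by
      ext m
      simp only [mem_filter, mem_neighbors, mem_erase]
      exact ⟨fun h => ⟨h.1.2.1, h.1.1, h.2⟩,
        fun h => ⟨⟨h.2.1, h.1, q, mem_inter.2 ⟨h.2.2, hq⟩⟩, h.2.2⟩⟩
    rw [h, card_erase_of_mem (mem_filter.2 ⟨hℓ, hq⟩), G.point_deg q, Nat.add_sub_cancel]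
  · have h : (G.neighbors ℓ).filter (q ∈ ·)
        = G.lines.filter fun m => q ∈ m ∧ ∃ r ∈ m, r ∈ ℓ := by
      ext m
      simp only [mem_filter, mem_neighbors, Finset.Nonempty, mem_inter]
      constructor
      · rintro ⟨⟨hm, -, r, hrm, hrℓ⟩, hqm⟩
        exact ⟨hm, hqm, r, hrm, hrℓ⟩
      · rintro ⟨hm, hqm, r, hrm, hrℓ⟩
        exact ⟨⟨hm, fun h => hq (h ▸ hqm), r, hrm, hrℓ⟩, hqm⟩
    rw [h, G.alpha_eq ℓ hℓ q hq]

theorem sum_neighbors_weight (f : P → ℝ) (hf : ∑ p, f p = 0) {ℓ : Finset P}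
    (hℓ : ℓ ∈ G.lines) :
    ∑ m ∈ G.neighbors ℓ, ∑ p ∈ m, f p = ((t : ℝ) - α) * ∑ p ∈ ℓ, f p := by
  calc ∑ m ∈ G.neighbors ℓ, ∑ p ∈ m, f p
      = ∑ q, ∑ m ∈ (G.neighbors ℓ).filter (q ∈ ·), f q :=
        sum_comm' fun m q => by simp only [mem_filter, mem_univ, true_and, and_comm]
    _ = ∑ q, (α * f q + ((t : ℝ) - α) * if q ∈ ℓ then f q else 0) := by
        refine sum_congr rfl fun q _ => ?_
        rw [sum_const, card_neighbors_filter_mem hℓ, nsmul_eq_mul]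
        split_ifs <;> ring
    _ = ((t : ℝ) - α) * ∑ p ∈ ℓ, f p := by
        rw [sum_add_distrib, ← mul_sum, ← mul_sum, hf, sum_ite_mem, univ_inter]
        ring

theorem card_neighbors_inter_neighbors_le {ℓ₁ ℓ₂ : Finset P} (h₁ : ℓ₁ ∈ G.lines)
    (h₂ : ℓ₂ ∈ G.lines) (hd : Disjoint ℓ₁ ℓ₂) :
    #(G.neighbors ℓ₁ ∩ G.neighbors ℓ₂) ≤ (s + 1) * α := by
  have hsub : G.neighbors ℓ₁ ∩ G.neighbors ℓ₂
      ⊆ ℓ₂.biUnion fun p => G.lines.filter fun m => p ∈ m ∧ ∃ q ∈ m, q ∈ ℓ₁ := by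
    intro m hm
    simp only [mem_inter, mem_neighbors, Finset.Nonempty] at hm
    obtain ⟨⟨hm, -, q, hq⟩, -, -, p, hp⟩ := hm
    exact mem_biUnion.2 ⟨p, hp.2, mem_filter.2 ⟨hm, hp.1, q, hq⟩⟩
  calc #(G.neighbors ℓ₁ ∩ G.neighbors ℓ₂)
      ≤ ∑ p ∈ ℓ₂, #(G.lines.filter fun m => p ∈ m ∧ ∃ q ∈ m, q ∈ ℓ₁) :=
        (card_le_card hsub).trans card_biUnion_le
    _ = ∑ _p ∈ ℓ₂, α :=
        sum_congr rfl fun p hp => G.alpha_eq ℓ₁ h₁ p (disjoint_right.1 hd hp)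
    _ = (s + 1) * α := by rw [sum_const, G.line_size ℓ₂ h₂, smul_eq_mul]

theorem card_filter_neighbors_union_add_two_le (Q : Finset P → Prop) [DecidablePred Q]
    {ℓ₁ ℓ₂ : Finset P} (h₁ : ℓ₁ ∈ G.lines) (h₂ : ℓ₂ ∈ G.lines) (hne : ℓ₁ ≠ ℓ₂)
    (hd : Disjoint ℓ₁ ℓ₂) (hQ₁ : Q ℓ₁) (hQ₂ : Q ℓ₂) :
    #((G.neighbors ℓ₁ ∪ G.neighbors ℓ₂).filter Q) + 2 ≤ #(G.lines.filter Q) := by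
  set X := (G.neighbors ℓ₁ ∪ G.neighbors ℓ₂).filter Q
  have hℓ₂ : ℓ₂ ∉ X := by
    simp only [X, mem_filter, mem_union, not_and_or]
    exact .inl (not_or.2 ⟨notMem_neighbors_of_disjoint hd, self_notMem_neighbors ℓ₂⟩)
  have hℓ₁ : ℓ₁ ∉ insert ℓ₂ X := by
    simp only [X, mem_insert, mem_filter, mem_union, not_or, not_and_or]
    exact ⟨hne, .inl ⟨self_notMem_neighbors ℓ₁, notMem_neighbors_of_disjoint hd.symm⟩⟩
  have hsub : insert ℓ₁ (insert ℓ₂ X) ⊆ G.lines.filter Q := by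
    refine insert_subset (mem_filter.2 ⟨h₁, hQ₁⟩) (insert_subset (mem_filter.2 ⟨h₂, hQ₂⟩) ?_)
    exact filter_subset_filter Q (union_subset (neighbors_subset ℓ₁) (neighbors_subset ℓ₂))
  have := card_le_card hsub
  rw [card_insert_of_notMem hℓ₁, card_insert_of_notMem hℓ₂] at this
  omega

theorem lt_card_filter_nonneg_neighbors_add (f : P → ℝ) (hf : ∑ p, f p = 0) {ℓ : Finset P}
    (hℓ : ℓ ∈ G.lines) (hpos : 0 < ∑ p ∈ ℓ, f p)
    (hle : ∀ m ∈ G.neighbors ℓ, 0 ≤ ∑ p ∈ m, f p → ∑ p ∈ m, f p ≤ ∑ p ∈ ℓ, f p)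
    (hfew : #((G.neighbors ℓ).filter fun m => 0 ≤ ∑ p ∈ m, f p) < t) :
    t < #((G.neighbors ℓ).filter fun m => 0 ≤ ∑ p ∈ m, f p) + α := by
  have hN : #((G.neighbors ℓ).filter fun m => 0 ≤ ∑ p ∈ m, f p) < #(G.neighbors ℓ) := by
    rw [card_neighbors hℓ]
    exact hfew.trans_le (Nat.le_mul_of_pos_left t s.succ_pos)
  have hsum := sum_lt_card_filter_nonneg_mul hle hN
  rw [sum_neighbors_weight f hf hℓ] at hsum
  have := lt_of_mul_lt_mul_right hsum hpos.le
  exact_mod_cast (by linarith :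
    (t : ℝ) < #((G.neighbors ℓ).filter fun m => 0 ≤ ∑ p ∈ m, f p) + α)

end PartialGeometry

open PartialGeometry

theorem highest_two_lines_meet_general {P : Type*} [Fintype P] [DecidableEq P]
    {s t α : ℕ} (G : PartialGeometry P s t α)
    (ht : (t : ℤ) > s * α + 3 * α - 4)
    (f : P → ℝ) (hf : ∑ p, f p = 0)
    (ℓ₁ ℓ₂ : Finset P) (h1 : ℓ₁ ∈ G.lines) (h2 : ℓ₂ ∈ G.lines) (hne : ℓ₁ ≠ ℓ₂)
    (hwt1 : ∑ p ∈ ℓ₁, f p = 1)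
    (hmax : ∀ m ∈ G.lines, ∑ p ∈ m, f p ≤ 1)
    (hsecond : ∀ m ∈ G.lines, m ≠ ℓ₁ → ∑ p ∈ m, f p ≤ ∑ p ∈ ℓ₂, f p)
    (hfew : (G.lines.filter (fun m => 0 ≤ ∑ p ∈ m, f p)).card ≤ t)
    (hpos : 2 ≤ (G.lines.filter (fun m => 0 < ∑ p ∈ m, f p)).card) :
    ∃ q, q ∈ ℓ₁ ∧ q ∈ ℓ₂ := by
  by_contra hmeet
  have hd : Disjoint ℓ₁ ℓ₂ := disjoint_left.2 fun q hq₁ hq₂ => hmeet ⟨q, hq₁, hq₂⟩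
  have hw₂ : 0 < ∑ p ∈ ℓ₂, f p := by
    obtain ⟨m, hm, hmℓ₁⟩ := exists_mem_ne hpos ℓ₁
    rw [mem_filter] at hm
    exact hm.2.trans_le (hsecond m hm.1 hmℓ₁)
  set A₁ := (G.neighbors ℓ₁).filter fun m => 0 ≤ ∑ p ∈ m, f p
  set A₂ := (G.neighbors ℓ₂).filter fun m => 0 ≤ ∑ p ∈ m, f p
  have hunion : #(A₁ ∪ A₂) + 2 ≤ t := by
    rw [← filter_union]
    refine (G.card_filter_neighbors_union_add_two_le _ h1 h2 hne hd ?_ hw₂.le).trans hfew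
    linarith
  have hinter : #(A₁ ∩ A₂) ≤ (s + 1) * α := by
    rw [← filter_inter_distrib]
    exact (card_filter_le _ _).trans (card_neighbors_inter_neighbors_le h1 h2 hd)
  have hA₁ : #A₁ < t := (card_le_card (subset_union_left (s₂ := A₂))).trans_lt (by omega)
  have hA₂ : #A₂ < t := (card_le_card (subset_union_right (s₁ := A₁))).trans_lt (by omega)
  have hk₁ : t < #A₁ + α :=
    lt_card_filter_nonneg_neighbors_add f hf h1 (by linarith)
      (fun m hm _ => hwt1 ▸ hmax m (neighbors_subset ℓ₁ hm)) hA₁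
  have hk₂ : t < #A₂ + α :=
    lt_card_filter_nonneg_neighbors_add f hf h2 hw₂
      (fun m hm _ => hsecond m (neighbors_subset ℓ₂ hm)
        fun h => notMem_neighbors_of_disjoint hd.symm (h ▸ hm)) hA₂
  have hcard := card_union_add_card_inter A₁ A₂
  zify at hunion hinter hk₁ hk₂ hcard
  linarith

/-- Under the assumptions of Section 3 (max line weight 1, at most t nonnegative
lines, at least 2 positive lines, t > sα + 3α − 4, α > 1), the two highest-weight
lines ℓ₁ and ℓ₂ meet in a point. -/
theorem highest_two_lines_meet {P : Type*} [Fintype P] [DecidableEq P]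
    {s t α : ℕ} (hα : 1 < α) (G : PartialGeometry P s t α)
    (ht : (t : ℤ) > s * α + 3 * α - 4)
    (f : P → ℝ) (hf : ∑ p, f p = 0)
    (ℓ₁ ℓ₂ : Finset P) (h1 : ℓ₁ ∈ G.lines) (h2 : ℓ₂ ∈ G.lines) (hne : ℓ₁ ≠ ℓ₂)
    (hwt1 : ∑ p ∈ ℓ₁, f p = 1)
    (hmax : ∀ m ∈ G.lines, ∑ p ∈ m, f p ≤ 1)
    (hsecond : ∀ m ∈ G.lines, m ≠ ℓ₁ → ∑ p ∈ m, f p ≤ ∑ p ∈ ℓ₂, f p)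
    (hfew : (G.lines.filter (fun m => 0 ≤ ∑ p ∈ m, f p)).card ≤ t)
    (hpos : 2 ≤ (G.lines.filter (fun m => 0 < ∑ p ∈ m, f p)).card) :
    ∃ q, q ∈ ℓ₁ ∧ q ∈ ℓ₂ :=
  highest_two_lines_meet_general G ht f hf ℓ₁ ℓ₂ h1 h2 hne hwt1 hmax hsecond hfew hpos
end

section
/- Let (V, B) be a 2-(v, k, 1) design containing a 2-(w, k, 1) subdesign (V′, B′) with V′ ⊆ V and B′ ⊆ B. If v < kw and w² − w < k(v−1), then (V, B) does not have the MMS star property: there is a zero-sum weighting of V for which fewer than (v−1)/(k−1) blocks have nonnegative weight. -/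
open scoped Classical BigOperators

/-- A 2-(v, k, 1) design: `v` points, blocks of size `k`, every pair of distinct
points in exactly one block. -/
structure TwoDesign (V : Type*) [Fintype V] [DecidableEq V] (v k : ℕ) where
  blocks : Finset (Finset V)
  card_points : Fintype.card V = v
  block_size : ∀ b ∈ blocks, b.card = k
  pair_unique : ∀ p q : V, p ≠ q → (blocks.filter (fun b => p ∈ b ∧ q ∈ b)).card = 1

/-- A 2-(v,k,1) design with a 2-(w,k,1) subdesign, v < kw and w² − w < k(v−1),
does not have the MMS star property: some zero-sum weighting has fewer than
(v−1)/(k−1) nonnegative blocks. -/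
theorem subdesign_not_MMS_star {V : Type*} [Fintype V] [DecidableEq V]
    {v k w : ℕ} (hk : 2 ≤ k) (hkw : k < w) (hwv : w < v) (D : TwoDesign V v k)
    (W : Finset V) (hW : W.card = w)
    (B' : Finset (Finset V)) (hB'sub : B' ⊆ D.blocks)
    (hB'pts : ∀ b ∈ B', b ⊆ W)
    (hB'pair : ∀ p ∈ W, ∀ q ∈ W, p ≠ q →
      (B'.filter (fun b => p ∈ b ∧ q ∈ b)).card = 1)
    (h1 : v < k * w) (h2 : w * w - w < k * (v - 1)) :
    ∃ f : V → ℝ, ∑ p, f p = 0 ∧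
      (D.blocks.filter (fun b => 0 ≤ ∑ p ∈ b, f p)).card * (k - 1) < v - 1 := by
  set f : V → ℝ := fun p => if p ∈ W then ((v : ℝ) - w) else -(w : ℝ) with hf
  refine ⟨f, ?_, ?_⟩
  · -- zero sum
    have hcW : (Wᶜ : Finset V).card = v - w := by
      rw [Finset.card_compl, hW, D.card_points]
    rw [← Finset.sum_add_sum_compl W]
    have hs1 : ∑ p ∈ W, f p = (w : ℝ) * ((v : ℝ) - w) := by
      have h : ∀ p ∈ W, f p = (v : ℝ) - w := fun p hp => by simp [hf, hp]
      rw [Finset.sum_congr rfl h, Finset.sum_const, hW, nsmul_eq_mul]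
    have hs2 : ∑ p ∈ Wᶜ, f p = ((v : ℝ) - w) * (-(w : ℝ)) := by
      have h : ∀ p ∈ (Wᶜ : Finset V), f p = -(w : ℝ) := fun p hp => by
        simp only [hf]; rw [if_neg (Finset.mem_compl.mp hp)]
      rw [Finset.sum_congr rfl h, Finset.sum_const, hcW, nsmul_eq_mul,
        Nat.cast_sub hwv.le]
    rw [hs1, hs2]; ring
  · -- counting
    have hsum : ∀ b ∈ D.blocks, ∑ p ∈ b, f p
        = ((b ∩ W).card : ℝ) * v - (k : ℝ) * w := by
      intro b hb
      have hk' : b.card = k := D.block_size b hb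
      have hmk : (b ∩ W).card ≤ k := hk' ▸ Finset.card_le_card (Finset.inter_subset_left)
      have hcard : (b \ W).card = k - (b ∩ W).card := by
        have := Finset.card_inter_add_card_sdiff b W
        omega
      rw [← Finset.sum_inter_add_sum_sdiff b W f]
      have hA : ∑ p ∈ b ∩ W, f p = ((b ∩ W).card : ℝ) * ((v : ℝ) - w) := by
        have h : ∀ p ∈ b ∩ W, f p = (v : ℝ) - w := fun p hp => by
          simp [hf, (Finset.mem_inter.mp hp).2]
        rw [Finset.sum_congr rfl h, Finset.sum_const, nsmul_eq_mul]
      have hB : ∑ p ∈ b \ W, f p = ((b \ W).card : ℝ) * (-(w : ℝ)) := by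
        have h : ∀ p ∈ b \ W, f p = -(w : ℝ) := fun p hp => by
          simp only [hf]; rw [if_neg (Finset.mem_sdiff.mp hp).2]
        rw [Finset.sum_congr rfl h, Finset.sum_const, nsmul_eq_mul]
      rw [hA, hB, hcard, Nat.cast_sub hmk]
      ring
    -- nonnegative blocks are in B'
    have hsubset : D.blocks.filter (fun b => 0 ≤ ∑ p ∈ b, f p) ⊆ B' := by
      intro b hb
      rw [Finset.mem_filter] at hb
      obtain ⟨hbB, hbnn⟩ := hb
      rw [hsum b hbB] at hbnn
      have hm2 : 2 ≤ (b ∩ W).card := by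
        by_contra hlt
        push_neg at hlt
        have hm1 : ((b ∩ W).card : ℝ) ≤ 1 := by exact_mod_cast Nat.lt_succ_iff.mp hlt
        have hv0 : (0:ℝ) < v := by
          have : 0 < v := by omega
          exact_mod_cast this
        nlinarith [(by exact_mod_cast h1 : (v:ℝ) < (k:ℝ) * w)]
      obtain ⟨p, hp, q, hq, hpq⟩ := Finset.one_lt_card.mp hm2
      have hpW := (Finset.mem_inter.mp hp).2
      have hqW := (Finset.mem_inter.mp hq).2
      have hpb := (Finset.mem_inter.mp hp).1
      have hqb := (Finset.mem_inter.mp hq).1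
      have hB1 := hB'pair p hpW q hqW hpq
      obtain ⟨b', hb'⟩ := Finset.card_eq_one.mp hB1
      have hb'mem : b' ∈ B'.filter (fun b => p ∈ b ∧ q ∈ b) := by
        rw [hb']; exact Finset.mem_singleton_self b'
      rw [Finset.mem_filter] at hb'mem
      have hD1 := D.pair_unique p q hpq
      obtain ⟨b'', hb''⟩ := Finset.card_eq_one.mp hD1
      have hbmem : b ∈ D.blocks.filter (fun b => p ∈ b ∧ q ∈ b) :=
        Finset.mem_filter.mpr ⟨hbB, hpb, hqb⟩
      have hb'mem2 : b' ∈ D.blocks.filter (fun b => p ∈ b ∧ q ∈ b) :=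
        Finset.mem_filter.mpr ⟨hB'sub hb'mem.1, hb'mem.2⟩
      rw [hb'', Finset.mem_singleton] at hbmem hb'mem2
      rw [hbmem, ← hb'mem2]
      exact hb'mem.1
    -- double counting: B'.card * (k * (k-1)) = w * (w-1)
    have hcount : B'.card * (k * (k - 1)) = w * (w - 1) := by
      have key : ∑ p ∈ W, ∑ q ∈ W.erase p, (B'.filter (fun b => p ∈ b ∧ q ∈ b)).card
          = w * (w - 1) := by
        have h : ∀ p ∈ W, ∑ q ∈ W.erase p,
            (B'.filter (fun b => p ∈ b ∧ q ∈ b)).card = w - 1 := by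
          intro p hp
          have h' : ∀ q ∈ W.erase p, (B'.filter (fun b => p ∈ b ∧ q ∈ b)).card = 1 :=
            fun q hq => hB'pair p hp q (Finset.mem_of_mem_erase hq)
              (Finset.ne_of_mem_erase hq).symm
          rw [Finset.sum_congr rfl h', Finset.sum_const, smul_eq_mul, mul_one,
            Finset.card_erase_of_mem hp, hW]
        rw [Finset.sum_congr rfl h, Finset.sum_const, smul_eq_mul, hW]
      rw [← key]
      have hrw : ∀ p ∈ W, ∀ q ∈ W.erase p,
          (B'.filter (fun b => p ∈ b ∧ q ∈ b)).card
          = ∑ b ∈ B', (if p ∈ b ∧ q ∈ b then 1 else 0) :=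
        fun p _ q _ => Finset.card_filter _ _
      rw [Finset.sum_congr rfl (fun p hp => Finset.sum_congr rfl (hrw p hp)),
        Finset.sum_congr rfl (fun p _ => Finset.sum_comm (s := W.erase p) (t := B')),
        Finset.sum_comm (s := W) (t := B')]
      have hper : ∀ b ∈ B', ∑ p ∈ W, ∑ q ∈ W.erase p,
          (if p ∈ b ∧ q ∈ b then 1 else 0) = k * (k - 1) := by
        intro b hb
        have hbW := hB'pts b hb
        have hbk : b.card = k := D.block_size b (hB'sub hb)
        have hinner : ∀ p ∈ W, ∑ q ∈ W.erase p,
            (if p ∈ b ∧ q ∈ b then 1 else 0) = if p ∈ b then k - 1 else 0 := by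
          intro p hp
          by_cases hpb : p ∈ b
          · simp only [hpb, true_and, if_true]
            rw [← Finset.card_filter, Finset.filter_mem_eq_inter]
            have : W.erase p ∩ b = b.erase p := by
              ext x
              simp only [Finset.mem_inter, Finset.mem_erase]
              exact ⟨fun ⟨⟨h1, _⟩, h2⟩ => ⟨h1, h2⟩, fun ⟨h1, h2⟩ => ⟨⟨h1, hbW h2⟩, h2⟩⟩
            rw [this, Finset.card_erase_of_mem hpb, hbk]
          · simp [hpb]
        rw [Finset.sum_congr rfl hinner, ← Finset.sum_filter,
          Finset.filter_mem_eq_inter, Finset.inter_eq_right.mpr hbW,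
          Finset.sum_const, smul_eq_mul, hbk]
      rw [Finset.sum_congr rfl hper, Finset.sum_const, smul_eq_mul]
    -- finish
    have hfil : (D.blocks.filter (fun b => 0 ≤ ∑ p ∈ b, f p)).card ≤ B'.card :=
      Finset.card_le_card hsubset
    have hww : w * (w - 1) = w * w - w := by
      obtain ⟨m, rfl⟩ : ∃ m, w = m + 1 := ⟨w - 1, by omega⟩
      have h : (m+1)*(m+1) = (m+1)*m + (m+1) := by ring
      simp only [Nat.add_sub_cancel]
      omega
    have hlt : B'.card * (k * (k-1)) < k * (v - 1) := by omega
    have hlt2 : B'.card * (k - 1) < v - 1 := by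
      have hre : B'.card * (k * (k-1)) = k * (B'.card * (k-1)) := by ring
      rw [hre] at hlt
      exact Nat.lt_of_mul_lt_mul_left hlt
    calc (D.blocks.filter (fun b => 0 ≤ ∑ p ∈ b, f p)).card * (k - 1)
        ≤ B'.card * (k - 1) := Nat.mul_le_mul_right _ hfil
      _ < v - 1 := hlt2
end

section
/- Let (V, B) be a 2-(v, k, 1) design containing a 2-(w, k, 1) subdesign. If v < kw and w² − w ≤ k(v−1), then (V, B) does not have the strict MMS star property: there is a zero-sum weighting such that no point has all blocks through it nonnegative. -/
open scoped Classical BigOperators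

/-- A 2-(v,k,1) design with a 2-(w,k,1) subdesign, v < kw and w² − w ≤ k(v−1),
does not have the strict MMS star property: some zero-sum weighting leaves no
point all of whose blocks are nonnegative. -/
theorem subdesign_not_strict_MMS_star {V : Type*} [Fintype V] [DecidableEq V]
    {v k w : ℕ} (hk : 2 ≤ k) (hkw : k < w) (hwv : w < v) (D : TwoDesign V v k)
    (W : Finset V) (hW : W.card = w)
    (B' : Finset (Finset V)) (hB'sub : B' ⊆ D.blocks)
    (hB'pts : ∀ b ∈ B', b ⊆ W)
    (hB'pair : ∀ p ∈ W, ∀ q ∈ W, p ≠ q →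
      (B'.filter (fun b => p ∈ b ∧ q ∈ b)).card = 1)
    (h1 : v < k * w) (h2 : w * w - w ≤ k * (v - 1)) :
    ∃ f : V → ℝ, ∑ p, f p = 0 ∧
      ∀ p : V, ∃ b ∈ D.blocks, p ∈ b ∧ ∑ q ∈ b, f q < 0 := by
  classical
  have hwv' : w ≤ v := hwv.le
  set f : V → ℝ := fun p => if p ∈ W then (v:ℝ) - w else -w with hf
  -- any block of D containing two distinct points of W is contained in W
  have key : ∀ b ∈ D.blocks, ∀ p q : V, p ∈ b → q ∈ b → p ≠ q → p ∈ W → q ∈ W → b ⊆ W := by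
    intro b hb p q hpb hqb hpq hpW hqW
    have hD := D.pair_unique p q hpq
    have hB := hB'pair p hpW q hqW hpq
    obtain ⟨b', hb'⟩ := Finset.card_eq_one.mp hB
    have hb'mem : b' ∈ B'.filter (fun b => p ∈ b ∧ q ∈ b) := by
      rw [hb']; exact Finset.mem_singleton_self b'
    rw [Finset.mem_filter] at hb'mem
    have hbmem : b ∈ D.blocks.filter (fun b => p ∈ b ∧ q ∈ b) :=
      Finset.mem_filter.mpr ⟨hb, hpb, hqb⟩
    have hb'mem2 : b' ∈ D.blocks.filter (fun b => p ∈ b ∧ q ∈ b) :=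
      Finset.mem_filter.mpr ⟨hB'sub hb'mem.1, hb'mem.2⟩
    obtain ⟨c, hc⟩ := Finset.card_eq_one.mp hD
    rw [hc, Finset.mem_singleton] at hbmem hb'mem2
    rw [hbmem, ← hb'mem2]
    exact hB'pts b' hb'mem.1
  -- the sum over any block containing a W-point and a non-W-point is negative
  have hsum : ∀ b ∈ D.blocks, ∀ x ∈ b, ∀ z ∈ b, x ∈ W → z ∉ W → ∑ q ∈ b, f q < 0 := by
    intro b hb x hx z hz hxW hzW
    have hfilt : b.filter (· ∈ W) = {x} := by
      apply Finset.eq_singleton_iff_unique_mem.mpr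
      refine ⟨Finset.mem_filter.mpr ⟨hx, hxW⟩, ?_⟩
      intro y hy
      rw [Finset.mem_filter] at hy
      by_contra hne
      exact hzW (key b hb y x hy.1 hx hne hy.2 hxW hz)
    have hk' : b.card = k := D.block_size b hb
    have hcard2 : (b.filter (fun a => ¬ a ∈ W)).card = k - 1 := by
      have h := Finset.card_filter_add_card_filter_not (s := b) (p := (· ∈ W))
      rw [hfilt] at h
      simp only [Finset.card_singleton] at h
      omega
    have heq : ∑ q ∈ b, f q = ((v:ℝ) - w) + (k-1 : ℕ) * (-(w:ℝ)) := by
      rw [← Finset.sum_filter_add_sum_filter_not b (· ∈ W), hfilt]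
      have e1 : ∑ q ∈ ({x} : Finset V), f q = (v:ℝ) - w := by
        simp [hf, hxW]
      have e2 : ∑ q ∈ b.filter (fun a => ¬ a ∈ W), f q = (k-1 : ℕ) * (-(w:ℝ)) := by
        have hc : ∀ q ∈ b.filter (fun a => ¬ a ∈ W), f q = -(w:ℝ) := by
          intro q hq; simp [hf, (Finset.mem_filter.mp hq).2]
        rw [Finset.sum_congr rfl hc, Finset.sum_const, hcard2, nsmul_eq_mul]
      rw [e1, e2]
    rw [heq]
    have hk1 : ((k-1:ℕ):ℝ) = (k:ℝ) - 1 := by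
      have : 1 ≤ k := by omega
      push_cast [Nat.cast_sub this]; ring
    have hvw : (v:ℝ) < (k:ℝ) * w := by exact_mod_cast h1
    rw [hk1]
    nlinarith [hvw]
  have hzero : ∑ p, f p = 0 := by
    rw [← Finset.sum_add_sum_compl W f]
    have e1 : ∑ p ∈ W, f p = (w:ℝ) * ((v:ℝ) - w) := by
      have hc : ∀ p ∈ W, f p = (v:ℝ) - w := by
        intro p hp; simp [hf, hp]
      rw [Finset.sum_congr rfl hc, Finset.sum_const, hW, nsmul_eq_mul]
    have e2 : ∑ p ∈ Wᶜ, f p = ((v - w : ℕ):ℝ) * (-(w:ℝ)) := by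
      have hc : ∀ p ∈ Wᶜ, f p = -(w:ℝ) := by
        intro p hp; simp [hf, Finset.mem_compl.mp hp]
      rw [Finset.sum_congr rfl hc, Finset.sum_const, Finset.card_compl, hW,
        D.card_points, nsmul_eq_mul]
    rw [e1, e2, Nat.cast_sub hwv']
    ring
  refine ⟨f, hzero, ?_⟩
  intro p
  by_cases hpW : p ∈ W
  · -- pick z outside W
    have hne : (Wᶜ : Finset V).Nonempty := by
      rw [← Finset.card_pos, Finset.card_compl, hW, D.card_points]; omega
    obtain ⟨z, hz⟩ := hne
    have hzW : z ∉ W := Finset.mem_compl.mp hz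
    have hpz : p ≠ z := fun h => hzW (h ▸ hpW)
    obtain ⟨b, hb⟩ := Finset.card_eq_one.mp (D.pair_unique p z hpz)
    have hbm : b ∈ D.blocks.filter (fun b => p ∈ b ∧ z ∈ b) := by
      rw [hb]; exact Finset.mem_singleton_self b
    rw [Finset.mem_filter] at hbm
    exact ⟨b, hbm.1, hbm.2.1, hsum b hbm.1 p hbm.2.1 z hbm.2.2 hpW hzW⟩
  · -- pick x inside W
    have hne : W.Nonempty := by
      rw [← Finset.card_pos, hW]; omega
    obtain ⟨x, hxW⟩ := hne
    have hpx : p ≠ x := fun h => hpW (h ▸ hxW)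
    obtain ⟨b, hb⟩ := Finset.card_eq_one.mp (D.pair_unique p x hpx)
    have hbm : b ∈ D.blocks.filter (fun b => p ∈ b ∧ x ∈ b) := by
      rw [hb]; exact Finset.mem_singleton_self b
    rw [Finset.mem_filter] at hbm
    exact ⟨b, hbm.1, hbm.2.1, hsum b hbm.1 x hbm.2.2 p hbm.2.1 hxW hpW⟩
end

section
/- Let (V, B) be the derived design of the Witt 4-(23,7,1) design, a 3-(22,6,1) design with 77 blocks and star size 21. Suppose B is a block such that every other block meets B in 0 or 2 points, and the 16 blocks disjoint from B form a 2-(16,6,2) design on V∖B. Then assigning weight 6 to points outside B and −16 to points of B is a zero-sum weighting under which exactly 16 blocks (those disjoint from B) are nonnegative; hence (V,B) does not have the MMS star property. -/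
open scoped Classical BigOperators

/-- A 3-(v, k, 1) design: `v` points, blocks of size `k`, every 3-subset of the
points in exactly one block. -/
structure ThreeDesign (V : Type*) [Fintype V] [DecidableEq V] (v k : ℕ) where
  blocks : Finset (Finset V)
  card_points : Fintype.card V = v
  block_size : ∀ b ∈ blocks, b.card = k
  triple_unique : ∀ T : Finset V, T.card = 3 →
    (blocks.filter (fun b => T ⊆ b)).card = 1

/-- In the derived 3-(22,6,1) design of the Witt design, with a block B met by
every other block in 0 or 2 points and whose 16 disjoint blocks form a
2-(16,6,2) design, the weighting 6 outside B and −16 on B is zero-sum, its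
nonnegative blocks are exactly the 16 blocks disjoint from B, and hence the
design does not have the MMS star property (fewer than 21 nonnegative blocks). -/
theorem wittDerived_not_MMS_star {V : Type*} [Fintype V] [DecidableEq V]
    (D : ThreeDesign V 22 6) (hcard : D.blocks.card = 77)
    (hstar : ∀ p : V, (D.blocks.filter (fun b => p ∈ b)).card = 21)
    (B : Finset V) (hB : B ∈ D.blocks)
    (hmeet : ∀ b ∈ D.blocks, b ≠ B → (b ∩ B).card = 0 ∨ (b ∩ B).card = 2)
    (hdisj : (D.blocks.filter (fun b => Disjoint b B)).card = 16)
    (hsub : ∀ p q : V, p ∉ B → q ∉ B → p ≠ q →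
      (D.blocks.filter (fun b => Disjoint b B ∧ p ∈ b ∧ q ∈ b)).card = 2) :
    (∑ p : V, (if p ∈ B then (-16 : ℝ) else 6)) = 0 ∧
      D.blocks.filter (fun b => 0 ≤ ∑ p ∈ b, (if p ∈ B then (-16 : ℝ) else 6))
        = D.blocks.filter (fun b => Disjoint b B) ∧
      (D.blocks.filter
          (fun b => 0 ≤ ∑ p ∈ b, (if p ∈ B then (-16 : ℝ) else 6))).card < 21 := by
  have hBcard : B.card = 6 := D.block_size B hB
  have key : ∀ b : Finset V, (∑ p ∈ b, (if p ∈ B then (-16 : ℝ) else 6))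
      = -16 * (b ∩ B).card + 6 * (b \ B).card := by
    intro b
    rw [← Finset.sum_inter_add_sum_sdiff b B]
    congr 1
    · rw [Finset.sum_congr rfl (fun p hp => if_pos (Finset.mem_inter.mp hp).2),
        Finset.sum_const, nsmul_eq_mul]
      ring
    · rw [Finset.sum_congr rfl (fun p hp => if_neg (Finset.mem_sdiff.mp hp).2),
        Finset.sum_const, nsmul_eq_mul]
      ring
  have h1 : (∑ p : V, (if p ∈ B then (-16 : ℝ) else 6)) = 0 := by
    rw [key Finset.univ, Finset.univ_inter, ← Finset.compl_eq_univ_sdiff,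
      Finset.card_compl, hBcard, D.card_points]
    norm_num
  have hfilt : D.blocks.filter (fun b => 0 ≤ ∑ p ∈ b, (if p ∈ B then (-16 : ℝ) else 6))
      = D.blocks.filter (fun b => Disjoint b B) := by
    apply Finset.filter_congr
    intro b hb
    have hb6 : b.card = 6 := D.block_size b hb
    have hdiff : (b \ B).card = b.card - (b ∩ B).card := Finset.card_sdiff_add_card_inter b B ▸ by
      omega
    rw [key b]
    constructor
    · intro hpos
      by_contra hnd
      have hm : (b ∩ B).card = 2 ∨ (b ∩ B).card = 6 := by
        rcases eq_or_ne b B with rfl | hne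
        · right; rw [Finset.inter_self]; exact hBcard
        · rcases hmeet b hb hne with h0 | h2
          · exact absurd (Finset.disjoint_iff_inter_eq_empty.mpr
              (Finset.card_eq_zero.mp h0)) hnd
          · exact Or.inl h2
      rcases hm with h | h <;>
      · rw [h, hdiff, hb6, h] at hpos
        norm_num at hpos
    · intro hd
      have h0 : (b ∩ B).card = 0 := by
        rw [Finset.card_eq_zero, ← Finset.disjoint_iff_inter_eq_empty]; exact hd
      rw [h0, hdiff, hb6, h0]
      norm_num
  refine ⟨h1, hfilt, ?_⟩
  rw [hfilt, hdisj]
  norm_num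
end

section
/- Let A be an OA(m, n) containing a subarray that is an OA(m, n′) (i.e., a set of (n′)² columns whose entries, after relabelling, form an OA(m, n′), so that columns outside the subarray meet the subarray's point set in at most one point). If n < m·n′ and (n′)² < n, then A does not have the MMS star property. -/
open scoped Classical BigOperators

/-- An orthogonal array OA(m, n): an m × n² array over an n-letter alphabet such
that between any two distinct rows every ordered pair of symbols occurs in
exactly one column. -/
structure OrthArray (m n : ℕ) where
  entry : Fin m → Fin (n ^ 2) → Fin n
  pairs : ∀ r r' : Fin m, r ≠ r' → ∀ a b : Fin n,
    ∃! c : Fin (n ^ 2), entry r c = a ∧ entry r' c = b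

/-- An OA(m, n) containing an OA(m, n′) subarray with n < m·n′ and (n′)² < n does
not have the MMS star property: some zero-sum weighting of the mn points gives
fewer than n nonnegative columns. -/
theorem subarray_not_MMS_star (m n n' : ℕ) (A : OrthArray m n)
    (S : Finset (Fin (n ^ 2))) (hScard : S.card = n' ^ 2)
    (Pts : Finset (Fin m × Fin n)) (hPts : Pts.card = m * n')
    (hin : ∀ c ∈ S, ∀ r : Fin m, (r, A.entry r c) ∈ Pts)
    (hcov : ∀ p ∈ Pts, ∃ c ∈ S, A.entry p.1 c = p.2)
    (hout : ∀ c ∉ S,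
      (Finset.univ.filter (fun r : Fin m => (r, A.entry r c) ∈ Pts)).card ≤ 1)
    (h1 : n < m * n') (h2 : n' ^ 2 < n) :
    ∃ f : Fin m × Fin n → ℝ, ∑ p, f p = 0 ∧
      (Finset.univ.filter
        (fun c : Fin (n ^ 2) => 0 ≤ ∑ r : Fin m, f (r, A.entry r c))).card < n := by
  have hm : 0 < m := by
    rcases Nat.eq_zero_or_pos m with h | h
    · subst h; simp at h1
    · exact h
  have hn' : 0 < n' := by
    rcases Nat.eq_zero_or_pos n' with h | h
    · subst h; simp at h1
    · exact h
  have hn'n : n' < n := lt_of_le_of_lt (Nat.le_self_pow two_ne_zero n') h2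
  set a : ℝ := (m : ℝ) * ((n : ℝ) - n') with ha
  set b : ℝ := -((m : ℝ) * n') with hb
  refine ⟨fun p => if p ∈ Pts then a else b, ?_, ?_⟩
  · have : ∀ p : Fin m × Fin n, (if p ∈ Pts then a else b)
        = (if p ∈ Pts then a - b else 0) + b := by
      intro p; split <;> ring
    simp only [this, Finset.sum_add_distrib, Finset.sum_ite_mem, Finset.univ_inter,
      Finset.sum_const, hPts, nsmul_eq_mul]
    have hcard : (Finset.univ : Finset (Fin m × Fin n)).card = m * n := by
      simp [Finset.card_univ]
    rw [hcard]
    push_cast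
    ring
  · -- every nonnegative column lies in S
    have key : ∀ c : Fin (n ^ 2),
        (∑ r : Fin m, if (r, A.entry r c) ∈ Pts then a else b)
        = ((Finset.univ.filter (fun r : Fin m => (r, A.entry r c) ∈ Pts)).card : ℝ)
            * ((m : ℝ) * n) - (m : ℝ) * ((m : ℝ) * n') := by
      intro c
      have : ∀ r : Fin m, (if (r, A.entry r c) ∈ Pts then a else b)
          = (if (r, A.entry r c) ∈ Pts then a - b else 0) + b := by
        intro r; split <;> ring
      simp only [this, Finset.sum_add_distrib, Finset.sum_ite, Finset.sum_const,
        nsmul_eq_mul, Finset.sum_const_zero, Finset.card_univ, Fintype.card_fin]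
      ring
    have hsub : (Finset.univ.filter
        (fun c : Fin (n ^ 2) => 0 ≤ ∑ r : Fin m,
          (if (r, A.entry r c) ∈ Pts then a else b))) ⊆ S := by
      intro c hc
      by_contra hcS
      rw [Finset.mem_filter] at hc
      have hk := hout c hcS
      have hkey := key c
      set k := (Finset.univ.filter (fun r : Fin m => (r, A.entry r c) ∈ Pts)).card
      have hkR : (k : ℝ) ≤ 1 := by exact_mod_cast hk
      have hmn : (n : ℝ) < (m : ℝ) * n' := by exact_mod_cast h1
      have hmR : (1 : ℝ) ≤ (m : ℝ) := by exact_mod_cast hm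
      have hnpos : (0 : ℝ) < (n : ℝ) := by
        have : 0 < n := lt_trans hn' hn'n
        exact_mod_cast this
      have : (∑ r : Fin m, if (r, A.entry r c) ∈ Pts then a else b) < 0 := by
        rw [hkey]
        have e1 : (k : ℝ) * ((m : ℝ) * n) ≤ 1 * ((m : ℝ) * n) :=
          mul_le_mul_of_nonneg_right hkR (by positivity)
        have e2 : (m : ℝ) * n < (m : ℝ) * ((m : ℝ) * n') :=
          by nlinarith
        linarith
      linarith [hc.2]
    calc (Finset.univ.filter
        (fun c : Fin (n ^ 2) => 0 ≤ ∑ r : Fin m,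
          (if (r, A.entry r c) ∈ Pts then a else b))).card
        ≤ S.card := Finset.card_le_card hsub
      _ = n' ^ 2 := hScard
      _ < n := h2
end

section
/- Let A be an OA(m, (m−1)²), m ≥ 3, containing a set S of (m−1)² − 1 columns that together with one additional column C form an OA(m, m−1) (up to the pointset of m(m−1) points), where C is not a column of A; assume every column of A not in S meets the point set of S∪{C} in at most one point of β or at most m−1 points of δ (δ = points of C, β = points of S not in C). Then A does not have the MMS star property. -/
open scoped Classical BigOperators

lemma sum_ite3 {α : Type*} [Fintype α] (P Q : α → Prop)
    [DecidablePred P] [DecidablePred Q]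
    (h : ∀ a, Q a → ¬ P a) (x y z : ℝ) :
    ∑ a, (if P a then x else if Q a then y else z)
      = (Finset.univ.filter P).card * x + (Finset.univ.filter Q).card * y
        + (Finset.univ.filter (fun a => ¬ P a ∧ ¬ Q a)).card * z := by
  classical
  rw [← Finset.sum_filter_add_sum_filter_not Finset.univ P]
  have h1 : ∑ a ∈ Finset.univ.filter P, (if P a then x else if Q a then y else z)
      = (Finset.univ.filter P).card * x := by
    rw [Finset.sum_congr rfl (fun a ha => ?_), Finset.sum_const, nsmul_eq_mul]
    simp [(Finset.mem_filter.mp ha).2]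
  have h2 : ∑ a ∈ Finset.univ.filter (fun a => ¬ P a), (if P a then x else if Q a then y else z)
      = (Finset.univ.filter Q).card * y
        + (Finset.univ.filter (fun a => ¬ P a ∧ ¬ Q a)).card * z := by
    rw [← Finset.sum_filter_add_sum_filter_not (Finset.univ.filter (fun a => ¬ P a)) Q]
    congr 1
    · rw [Finset.filter_filter]
      have : Finset.univ.filter (fun a => ¬ P a ∧ Q a) = Finset.univ.filter Q := by
        apply Finset.filter_congr; intro a _; constructor
        · exact fun hh => hh.2
        · exact fun hq => ⟨h a hq, hq⟩
      rw [this, Finset.sum_congr rfl (fun a ha => ?_), Finset.sum_const, nsmul_eq_mul]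
      have hq := (Finset.mem_filter.mp ha).2
      simp [hq, h a hq]
    · rw [Finset.filter_filter, Finset.sum_congr rfl (fun a ha => ?_), Finset.sum_const, nsmul_eq_mul]
      have hq := (Finset.mem_filter.mp ha).2
      simp [hq.1, hq.2]
  rw [h1, h2]; ring

lemma card3 {α : Type*} [Fintype α] (P Q : α → Prop)
    [DecidablePred P] [DecidablePred Q] (h : ∀ a, Q a → ¬ P a) :
    (Finset.univ.filter P).card + (Finset.univ.filter Q).card
      + (Finset.univ.filter (fun a => ¬ P a ∧ ¬ Q a)).card = Fintype.card α := by
  classical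
  have h1 := Finset.card_filter_add_card_filter_not (s := (Finset.univ : Finset α)) (p := P)
  have h2 := Finset.card_filter_add_card_filter_not
    (s := Finset.univ.filter (fun a => ¬ P a)) (p := Q)
  rw [Finset.filter_filter, Finset.filter_filter] at h2
  have e1 : Finset.univ.filter (fun a => ¬ P a ∧ Q a) = Finset.univ.filter Q := by
    apply Finset.filter_congr; intro a _; exact ⟨fun hh => hh.2, fun hq => ⟨h a hq, hq⟩⟩
  rw [e1] at h2
  simp only [Finset.card_univ] at h1
  omega

/-- Shifted MacNeish situation: an OA(m, (m−1)²), m ≥ 3, containing a set S of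
(m−1)² − 1 columns which together with a missing column C (not a column of A)
forms an OA(m, m−1) on the point set δ ∪ β (δ the m points of C, β the m(m−2)
points of S outside C), such that every column outside S meets δ ∪ β in at most
one point of β (and then no point of δ) or in at most m−1 points of δ (and no
point of β). Then A does not have the MMS star property. -/
theorem shiftedMacNeish_not_MMS_star (m : ℕ) (hm : 3 ≤ m)
    (A : OrthArray m ((m - 1) ^ 2))
    (S : Finset (Fin (((m - 1) ^ 2) ^ 2))) (hScard : S.card = (m - 1) ^ 2 - 1)
    (C : Fin m → Fin ((m - 1) ^ 2))
    (hC : ∀ c : Fin (((m - 1) ^ 2) ^ 2), ∃ r : Fin m, A.entry r c ≠ C r)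
    (β : Finset (Fin m × Fin ((m - 1) ^ 2)))
    (hβcard : β.card = m * (m - 2))
    (hβδ : ∀ r : Fin m, (r, C r) ∉ β)
    (hSin : ∀ c ∈ S, ∀ r : Fin m, (r, A.entry r c) ∈ β ∨ A.entry r c = C r)
    (hβcov : ∀ p ∈ β, ∃ c ∈ S, A.entry p.1 c = p.2)
    (hout : ∀ c ∉ S,
      ((Finset.univ.filter (fun r : Fin m => (r, A.entry r c) ∈ β)).card = 1 ∧
        (Finset.univ.filter (fun r : Fin m => A.entry r c = C r)).card = 0) ∨
      ((Finset.univ.filter (fun r : Fin m => (r, A.entry r c) ∈ β)).card = 0 ∧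
        (Finset.univ.filter (fun r : Fin m => A.entry r c = C r)).card ≤ m - 1)) :
    ∃ f : Fin m × Fin ((m - 1) ^ 2) → ℝ, ∑ p, f p = 0 ∧
      (Finset.univ.filter (fun c : Fin (((m - 1) ^ 2) ^ 2) =>
        0 ≤ ∑ r : Fin m, f (r, A.entry r c))).card < (m - 1) ^ 2 := by
  classical
  have hM : (3 : ℝ) ≤ (m : ℝ) := by exact_mod_cast hm
  have hM2 : (0 : ℝ) < (m : ℝ) - 2 := by linarith
  set w : ℝ := (m : ℝ) * ((m : ℝ) - 1) - 1 / ((m : ℝ) - 2) with hw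
  refine ⟨fun p => if p.2 = C p.1 then 1 else if p ∈ β then w else -(m : ℝ), ?_, ?_⟩
  · -- total sum is zero
    set P : Fin m × Fin ((m - 1) ^ 2) → Prop := fun p => p.2 = C p.1 with hP
    set Q : Fin m × Fin ((m - 1) ^ 2) → Prop := fun p => p ∈ β with hQ
    have hdisj : ∀ p, Q p → ¬ P p := by
      rintro ⟨r, s⟩ hq hp
      simp only [P] at hp
      exact hβδ r (by rwa [hp] at hq)
    show ∑ p : Fin m × Fin ((m - 1) ^ 2), (if P p then (1:ℝ) else if Q p then w else -(m : ℝ)) = 0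
    rw [sum_ite3 P Q hdisj 1 w (-(m : ℝ))]
    have hPcard : (Finset.univ.filter P).card = m := by
      have : Finset.univ.filter P = Finset.univ.image (fun r : Fin m => (r, C r)) := by
        ext ⟨r, s⟩
        simp only [Finset.mem_filter, Finset.mem_univ, true_and, Finset.mem_image, P,
          Prod.mk.injEq]
        constructor
        · intro hs; exact ⟨r, rfl, hs.symm⟩
        · rintro ⟨r', rfl, rfl⟩; rfl
      rw [this, Finset.card_image_of_injective _ (fun a b hab => congrArg Prod.fst hab),
        Finset.card_univ, Fintype.card_fin]
    have hQcard : (Finset.univ.filter Q).card = m * (m - 2) := by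
      have : Finset.univ.filter Q = β := by
        ext p; simp [Q]
      rw [this, hβcard]
    have hRcard := card3 P Q hdisj
    rw [hPcard, hQcard] at hRcard
    set R := (Finset.univ.filter (fun a => ¬ P a ∧ ¬ Q a)).card with hRdef
    have hcardα : Fintype.card (Fin m × Fin ((m - 1) ^ 2)) = m * (m - 1) ^ 2 := by
      simp
    rw [hcardα] at hRcard
    have hRreal : (R : ℝ) = (m : ℝ) * ((m : ℝ) - 1) ^ 2 - (m : ℝ) - (m : ℝ) * ((m : ℝ) - 2) := by
      have h1 : (1 : ℕ) ≤ m := by omega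
      have h2 : (2 : ℕ) ≤ m := by omega
      have : (m : ℝ) + (m : ℝ) * ((m : ℝ) - 2) + (R : ℝ) = (m : ℝ) * ((m : ℝ) - 1) ^ 2 := by
        exact_mod_cast congrArg (Nat.cast : ℕ → ℝ)
          (by push_cast [Nat.cast_sub h1, Nat.cast_sub h2] at hRcard ⊢; exact hRcard)
      linarith [this]
    rw [hPcard, hQcard, hRreal]
    have h2 : (2 : ℕ) ≤ m := by omega
    push_cast [Nat.cast_sub h2]
    rw [hw]
    field_simp
    ring
  · -- few nonnegative columns
    have key : ∀ c ∉ S, ¬ (0 ≤ ∑ r : Fin m,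
        (if A.entry r c = C r then (1:ℝ) else if (r, A.entry r c) ∈ β then w else -(m : ℝ))) := by
      intro c hc
      set P : Fin m → Prop := fun r => A.entry r c = C r with hP
      set Q : Fin m → Prop := fun r => (r, A.entry r c) ∈ β with hQ
      have hdisj : ∀ r, Q r → ¬ P r := by
        intro r hq hp
        simp only [P] at hp
        simp only [Q] at hq
        exact hβδ r (by rwa [hp] at hq)
      show ¬ (0 ≤ ∑ r : Fin m, (if P r then (1:ℝ) else if Q r then w else -(m : ℝ)))
      rw [sum_ite3 P Q hdisj 1 w (-(m : ℝ)), not_le]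
      have hRcard := card3 P Q hdisj
      rw [Fintype.card_fin] at hRcard
      rcases hout c hc with ⟨hQ1, hP0⟩ | ⟨hQ0, hPle⟩
      · rw [hP0, hQ1] at hRcard ⊢
        have hR : (Finset.univ.filter (fun a => ¬ P a ∧ ¬ Q a)).card = m - 1 := by omega
        rw [hR]
        have h1 : (1 : ℕ) ≤ m := by omega
        push_cast [Nat.cast_sub h1]
        rw [hw]
        have : (0:ℝ) < 1 / ((m : ℝ) - 2) := by positivity
        nlinarith [this]
      · rw [hQ0] at hRcard ⊢
        set d := (Finset.univ.filter P).card with hd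
        have hdle : (d : ℝ) ≤ (m : ℝ) - 1 := by
          have h1 : (1 : ℕ) ≤ m := by omega
          have hdd : d ≤ m - 1 := hPle
          have h2 := (Nat.cast_le (α := ℝ)).mpr hdd
          rwa [Nat.cast_sub h1, Nat.cast_one] at h2
        have hR : (Finset.univ.filter (fun a => ¬ P a ∧ ¬ Q a)).card = m - d := by omega
        rw [hR]
        have hdm : d ≤ m := by omega
        push_cast [Nat.cast_sub hdm]
        nlinarith [hdle, hM]
    have hsub : (Finset.univ.filter (fun c : Fin (((m - 1) ^ 2) ^ 2) =>
        0 ≤ ∑ r : Fin m, (if A.entry r c = C r then (1:ℝ)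
          else if (r, A.entry r c) ∈ β then w else -(m : ℝ)))) ⊆ S := by
      intro c hcmem
      by_contra hcS
      exact key c hcS (Finset.mem_filter.mp hcmem).2
    calc (Finset.univ.filter _).card ≤ S.card := Finset.card_le_card hsub
      _ = (m - 1) ^ 2 - 1 := hScard
      _ < (m - 1) ^ 2 := by
          have : 1 ≤ (m - 1) ^ 2 := by
            have : 2 ≤ m - 1 := by omega
            nlinarith
          omega
end

section
/- Let A be an OA(3, 6) (a Latin square of order 6) containing an OA(3, 3) subarray B. Then A does not have the strict MMS star property: there is a zero-sum weighting under which exactly 6 columns are nonnegative and these 6 columns do not all pass through a common point. -/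
open scoped Classical BigOperators

/-- An OA(3,6) (Latin square of order 6) with an OA(3,3) subarray does not have
the strict MMS star property: there is a zero-sum weighting with exactly 6
nonnegative columns, and every point lies on some negative column. -/
theorem latinSquare6_with_subsquare_not_strict_MMS (A : OrthArray 3 6)
    (S : Finset (Fin (6 ^ 2))) (hScard : S.card = 3 ^ 2)
    (Pts : Finset (Fin 3 × Fin 6)) (hPts : Pts.card = 9)
    (hin : ∀ c ∈ S, ∀ r : Fin 3, (r, A.entry r c) ∈ Pts)
    (hcov : ∀ p ∈ Pts, ∃ c ∈ S, A.entry p.1 c = p.2)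
    (hout : ∀ c ∉ S,
      (Finset.univ.filter (fun r : Fin 3 => (r, A.entry r c) ∈ Pts)).card ≤ 1) :
    ∃ f : Fin 3 × Fin 6 → ℝ, ∑ p, f p = 0 ∧
      (Finset.univ.filter
        (fun c : Fin (6 ^ 2) => 0 ≤ ∑ r : Fin 3, f (r, A.entry r c))).card = 6 ∧
      ∀ p : Fin 3 × Fin 6, ∃ c : Fin (6 ^ 2),
        A.entry p.1 c = p.2 ∧ (∑ r : Fin 3, f (r, A.entry r c)) < 0 := by
  classical
  norm_num at hScard
  have uniq : ∀ (r r' : Fin 3), r ≠ r' → ∀ c c' : Fin (6 ^ 2),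
      A.entry r c = A.entry r c' → A.entry r' c = A.entry r' c' → c = c' := by
    intro r r' h c c' h1 h2
    obtain ⟨d, -, hu⟩ := A.pairs r r' h (A.entry r c) (A.entry r' c)
    exact (hu c ⟨rfl, rfl⟩).trans (hu c' ⟨h1.symm, h2.symm⟩).symm
  have other : ∀ r : Fin 3, ∃ r' : Fin 3, r' ≠ r := by
    intro r; fin_cases r
    · exact ⟨1, by decide⟩
    · exact ⟨0, by decide⟩
    · exact ⟨0, by decide⟩
  set P : Fin 3 → Finset (Fin 6) := fun r => (Pts.filter fun p => p.1 = r).image Prod.snd with hP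
  have hPmem : ∀ (r : Fin 3) (c : Fin (6 ^ 2)), c ∈ S → A.entry r c ∈ P r := by
    intro r c hc
    exact Finset.mem_image.2 ⟨(r, A.entry r c), Finset.mem_filter.2 ⟨hin c hc r, rfl⟩, rfl⟩
  have hPcard : ∀ r : Fin 3, (P r).card = (Pts.filter fun p => p.1 = r).card := by
    intro r
    apply Finset.card_image_of_injOn
    intro p hp q hq hpq
    have hp1 := (Finset.mem_filter.1 hp).2
    have hq1 := (Finset.mem_filter.1 hq).2
    exact Prod.ext (hp1.trans hq1.symm) hpq
  have hsum : (P 0).card + (P 1).card + (P 2).card = 9 := by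
    have h := Finset.card_eq_sum_card_fiberwise (f := Prod.fst) (s := Pts)
      (t := (Finset.univ : Finset (Fin 3))) (fun x _ => Finset.mem_univ _)
    rw [hPts, Fin.sum_univ_three] at h
    rw [hPcard 0, hPcard 1, hPcard 2]
    omega
  have hprod : ∀ r r' : Fin 3, r ≠ r' → 9 ≤ (P r).card * (P r').card := by
    intro r r' h
    have hle : S.card ≤ ((P r) ×ˢ (P r')).card := by
      apply Finset.card_le_card_of_injOn (fun c => (A.entry r c, A.entry r' c))
      · intro c hc; exact Finset.mem_product.2 ⟨hPmem r c hc, hPmem r' c hc⟩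
      · intro c hc c' hc' hcc
        exact uniq r r' h c c' (congrArg Prod.fst hcc) (congrArg Prod.snd hcc)
    rwa [hScard, Finset.card_product] at hle
  have key : ∀ a b c : ℕ, a + b + c = 9 → 9 ≤ a * b → 9 ≤ a * c → 9 ≤ b * c → a = 3 := by
    intro a b c h hab hac hbc
    have ha : a ≤ 9 := by omega
    have hbb : b ≤ 9 := by omega
    interval_cases a <;> interval_cases b <;> omega
  have hP3 : ∀ r : Fin 3, (P r).card = 3 := by
    have e0 : (P 0).card = 3 :=
      key _ _ _ hsum (hprod 0 1 (by decide)) (hprod 0 2 (by decide)) (hprod 1 2 (by decide))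
    have e1 : (P 1).card = 3 :=
      key (P 1).card (P 0).card (P 2).card (by omega) (hprod 1 0 (by decide))
        (hprod 1 2 (by decide)) (hprod 0 2 (by decide))
    have e2 : (P 2).card = 3 :=
      key (P 2).card (P 0).card (P 1).card (by omega) (hprod 2 0 (by decide))
        (hprod 2 1 (by decide)) (hprod 0 1 (by decide))
    intro r; fin_cases r
    exacts [e0, e1, e2]
  have Tle : ∀ (r : Fin 3) (a : Fin 6), (S.filter fun c => A.entry r c = a).card ≤ 3 := by
    intro r a
    obtain ⟨r', hr'⟩ := other r
    calc (S.filter fun c => A.entry r c = a).card ≤ (P r').card := by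
          apply Finset.card_le_card_of_injOn (fun c => A.entry r' c)
          · intro c hc; exact hPmem r' c (Finset.mem_filter.1 hc).1
          · intro c hc c' hc' hcc
            have h1 := (Finset.mem_filter.1 hc).2
            have h2 := (Finset.mem_filter.1 hc').2
            exact uniq r r' (Ne.symm hr') c c' (h1.trans h2.symm) hcc
      _ = 3 := hP3 r'
  obtain ⟨b, hb⟩ : Pts.Nonempty := Finset.card_pos.1 (by omega)
  have hfib : (9 : ℕ) = ∑ a ∈ P b.1, (S.filter fun c => A.entry b.1 c = a).card := by
    rw [← hScard]
    exact Finset.card_eq_sum_card_fiberwise (fun c hc => hPmem b.1 c hc)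
  have hb2 : b.2 ∈ P b.1 := Finset.mem_image.2 ⟨b, Finset.mem_filter.2 ⟨hb, rfl⟩, rfl⟩
  have hTb : (S.filter fun c => A.entry b.1 c = b.2).card = 3 := by
    by_contra hne
    have hlt : (S.filter fun c => A.entry b.1 c = b.2).card < 3 :=
      lt_of_le_of_ne (Tle b.1 b.2) hne
    have hslt : ∑ a ∈ P b.1, (S.filter fun c => A.entry b.1 c = a).card
        < ∑ a ∈ P b.1, 3 :=
      Finset.sum_lt_sum (fun a _ => Tle b.1 a) ⟨b.2, hb2, hlt⟩
    rw [Finset.sum_const, hP3 b.1, smul_eq_mul, ← hfib] at hslt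
    omega
  set fw : Fin 3 × Fin 6 → ℝ := fun p => if p = b then -5 else if p ∈ Pts then 7/4 else -1 with hfw
  have hfle : ∀ p, fw p ≤ 7/4 := by
    intro p; simp only [hfw]; split_ifs <;> norm_num
  have hneg1 : ∀ p, p ∉ Pts → fw p = -1 := by
    intro p hp
    have hpb : p ≠ b := fun h => hp (h ▸ hb)
    simp [hfw, hpb, hp]
  have wS_pos : ∀ c ∈ S, A.entry b.1 c ≠ b.2 → 0 ≤ ∑ r : Fin 3, fw (r, A.entry r c) := by
    intro c hc hcb
    have hterm : ∀ r : Fin 3, fw (r, A.entry r c) = 7/4 := by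
      intro r
      have hmem := hin c hc r
      have hne : (r, A.entry r c) ≠ b := by
        intro h
        rw [← h] at hcb
        simp at hcb
      simp [hfw, hne, hmem]
    rw [Fin.sum_univ_three, hterm, hterm, hterm]; norm_num
  have wSb_neg : ∀ c ∈ S, A.entry b.1 c = b.2 → (∑ r : Fin 3, fw (r, A.entry r c)) < 0 := by
    intro c hc hcb
    have hbeq : (b.1, A.entry b.1 c) = b := Prod.ext rfl hcb
    have hbterm : fw (b.1, A.entry b.1 c) = -5 := by simp [hfw, hbeq]
    have hsplit : ∑ r : Fin 3, fw (r, A.entry r c)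
        = fw (b.1, A.entry b.1 c) + ∑ r ∈ Finset.univ.erase b.1, fw (r, A.entry r c) :=
      (Finset.add_sum_erase _ _ (Finset.mem_univ b.1)).symm
    have hcard2 : (Finset.univ.erase b.1).card = 2 := by
      rw [Finset.card_erase_of_mem (Finset.mem_univ _)]; simp
    have hbound : ∑ r ∈ Finset.univ.erase b.1, fw (r, A.entry r c) ≤ 2 * (7/4 : ℝ) := by
      have h := Finset.sum_le_card_nsmul (Finset.univ.erase b.1)
        (fun r => fw (r, A.entry r c)) (7/4) (fun r _ => hfle _)
      rw [hcard2] at h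
      simpa [nsmul_eq_mul] using h
    rw [hsplit, hbterm]; linarith
  have wout_neg : ∀ c ∉ S, (∑ r : Fin 3, fw (r, A.entry r c)) < 0 := by
    intro c hc
    have hTcard := hout c hc
    have hnot2 : ∀ r r' : Fin 3, r ≠ r' → (r, A.entry r c) ∈ Pts →
        (r', A.entry r' c) ∈ Pts → False := by
      intro r r' hrr h1 h2
      have hsub : ({r, r'} : Finset (Fin 3)) ⊆
          Finset.univ.filter (fun r : Fin 3 => (r, A.entry r c) ∈ Pts) := by
        intro x hx
        simp only [Finset.mem_insert, Finset.mem_singleton] at hx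
        rcases hx with rfl | rfl <;> simp [h1, h2]
      have hcc := Finset.card_le_card hsub
      rw [Finset.card_insert_of_notMem (by simp [hrr]), Finset.card_singleton] at hcc
      omega
    rw [Fin.sum_univ_three]
    by_cases h0 : ((0 : Fin 3), A.entry 0 c) ∈ Pts
    · have h1 : ((1 : Fin 3), A.entry 1 c) ∉ Pts := fun h => hnot2 0 1 (by decide) h0 h
      have h2 : ((2 : Fin 3), A.entry 2 c) ∉ Pts := fun h => hnot2 0 2 (by decide) h0 h
      have := hfle ((0 : Fin 3), A.entry 0 c)
      rw [hneg1 _ h1, hneg1 _ h2]; linarith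
    · by_cases h1 : ((1 : Fin 3), A.entry 1 c) ∈ Pts
      · have h2 : ((2 : Fin 3), A.entry 2 c) ∉ Pts := fun h => hnot2 1 2 (by decide) h1 h
        have := hfle ((1 : Fin 3), A.entry 1 c)
        rw [hneg1 _ h0, hneg1 _ h2]; linarith
      · by_cases h2 : ((2 : Fin 3), A.entry 2 c) ∈ Pts
        · have := hfle ((2 : Fin 3), A.entry 2 c)
          rw [hneg1 _ h0, hneg1 _ h1]; linarith
        · rw [hneg1 _ h0, hneg1 _ h1, hneg1 _ h2]; norm_num
  refine ⟨fw, ?_, ?_, ?_⟩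
  · -- zero sum
    have hcompl : ∑ p ∈ Ptsᶜ, fw p = -9 := by
      have hall : ∀ p ∈ Ptsᶜ, fw p = -1 := fun p hp => hneg1 p (Finset.mem_compl.1 hp)
      rw [Finset.sum_congr rfl hall, Finset.sum_const]
      have hcc : Ptsᶜ.card = 9 := by
        rw [Finset.card_compl, hPts]
        simp
      rw [hcc]
      simp
    have hpts : ∑ p ∈ Pts, fw p = 9 := by
      rw [← Finset.sum_erase_add _ _ hb]
      have hall : ∀ p ∈ Pts.erase b, fw p = 7/4 := by
        intro p hp
        have h1 := Finset.ne_of_mem_erase hp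
        have h2 := Finset.mem_of_mem_erase hp
        simp [hfw, h1, h2]
      have hfb : fw b = -5 := by simp [hfw]
      rw [Finset.sum_congr rfl hall, Finset.sum_const, Finset.card_erase_of_mem hb, hPts, hfb]
      norm_num
    rw [← Finset.sum_add_sum_compl Pts fw, hpts, hcompl]
    norm_num
  · -- exactly 6 nonnegative columns
    have hset : Finset.univ.filter (fun c : Fin (6 ^ 2) => 0 ≤ ∑ r : Fin 3, fw (r, A.entry r c))
        = S \ (S.filter fun c => A.entry b.1 c = b.2) := by
      ext c
      simp only [Finset.mem_filter, Finset.mem_univ, true_and, Finset.mem_sdiff]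
      constructor
      · intro h
        by_cases hcS : c ∈ S
        · refine ⟨hcS, ?_⟩
          intro hmem
          have := wSb_neg c hcS hmem.2
          linarith
        · exact absurd h (not_le.2 (wout_neg c hcS))
      · rintro ⟨hcS, hnb⟩
        apply wS_pos c hcS
        intro hEq
        exact hnb ⟨hcS, hEq⟩
    rw [hset, Finset.card_sdiff_of_subset (Finset.filter_subset _ _), hTb, hScard]
  · -- every point is on a negative column
    intro p
    obtain ⟨r', hr'⟩ := other p.1
    have hF : (Finset.univ.filter fun c : Fin (6 ^ 2) => A.entry p.1 c = p.2).card = 6 := by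
      have hbij : (Finset.univ.filter fun c : Fin (6 ^ 2) => A.entry p.1 c = p.2).card
          = (Finset.univ : Finset (Fin 6)).card := by
        apply Finset.card_bij (fun c _ => A.entry r' c)
        · intro c hc; exact Finset.mem_univ _
        · intro c hc c' hc' h
          have h1 := (Finset.mem_filter.1 hc).2
          have h2 := (Finset.mem_filter.1 hc').2
          exact uniq p.1 r' (Ne.symm hr') c c' (h1.trans h2.symm) h
        · intro a _
          obtain ⟨c, ⟨hc1, hc2⟩, -⟩ := A.pairs p.1 r' (Ne.symm hr') p.2 a
          exact ⟨c, Finset.mem_filter.2 ⟨Finset.mem_univ _, hc1⟩, hc2⟩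
      rw [hbij]
      simp
    have hinter : ((Finset.univ.filter fun c : Fin (6 ^ 2) => A.entry p.1 c = p.2) ∩ S).card ≤ 3 := by
      have hsub : (Finset.univ.filter fun c : Fin (6 ^ 2) => A.entry p.1 c = p.2) ∩ S
          ⊆ S.filter fun c => A.entry p.1 c = p.2 := by
        intro c hc
        simp only [Finset.mem_inter, Finset.mem_filter, Finset.mem_univ, true_and] at hc ⊢
        exact ⟨hc.2, hc.1⟩
      exact le_trans (Finset.card_le_card hsub) (Tle p.1 p.2)
    have hdiff : 0 < ((Finset.univ.filter fun c : Fin (6 ^ 2) => A.entry p.1 c = p.2) \ S).card := by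
      have h := Finset.card_inter_add_card_sdiff
        (Finset.univ.filter fun c : Fin (6 ^ 2) => A.entry p.1 c = p.2) S
      omega
    obtain ⟨c, hc⟩ := Finset.card_pos.1 hdiff
    rw [Finset.mem_sdiff, Finset.mem_filter] at hc
    exact ⟨c, hc.1.2, wout_neg c hc.2⟩
end

section
/- Under a zero-sum weighting of a partial geometry (s, t, α), max line weight 1, with at most t nonnegative lines, t > sα + 3α − 4, α > 1, at least 2 positive lines: letting p be the intersection point of the two highest-weight lines, at most sα + 2α − s − 2 negative lines pass through p, and at most sα − s + 2α − 3 nonnegative lines avoid p. -/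
open scoped Classical BigOperators

private lemma pg_double_count {P : Type*} [Fintype P] [DecidableEq P] (f : P → ℝ)
    (S : Finset (Finset P)) :
    ∑ m ∈ S, ∑ q ∈ m, f q
      = ∑ q : P, ((S.filter (fun m => q ∈ m)).card : ℝ) * f q := by
  have h1 : ∀ m ∈ S, ∑ q ∈ m, f q = ∑ q : P, if q ∈ m then f q else 0 := by
    intro m _
    rw [Finset.sum_ite_mem, Finset.univ_inter]
  rw [Finset.sum_congr rfl h1, Finset.sum_comm]
  refine Finset.sum_congr rfl fun q _ => ?_
  rw [Finset.sum_ite, Finset.sum_const, Finset.sum_const_zero, add_zero, nsmul_eq_mul]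

private lemma pg_neighbour_sum {P : Type*} [Fintype P] [DecidableEq P] {s t α : ℕ}
    (G : PartialGeometry P s t α) (f : P → ℝ) (hf : ∑ p, f p = 0)
    {ℓ : Finset P} (hℓ : ℓ ∈ G.lines) :
    ∑ m ∈ G.lines.filter (fun m => m ≠ ℓ ∧ ∃ q ∈ m, q ∈ ℓ), ∑ q ∈ m, f q
      = (t : ℝ) * (∑ q ∈ ℓ, f q) - (α : ℝ) * (∑ q ∈ ℓ, f q) := by
  rw [pg_double_count]
  rw [← Finset.sum_add_sum_compl ℓ]
  have hin : ∀ q ∈ ℓ,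
      (((G.lines.filter (fun m => m ≠ ℓ ∧ ∃ r ∈ m, r ∈ ℓ)).filter (fun m => q ∈ m)).card : ℝ)
        = (t : ℝ) := by
    intro q hq
    have he : (G.lines.filter (fun m => m ≠ ℓ ∧ ∃ r ∈ m, r ∈ ℓ)).filter (fun m => q ∈ m)
        = (G.lines.filter (fun m => q ∈ m)).erase ℓ := by
      ext m
      simp only [Finset.mem_filter, Finset.mem_erase]
      constructor
      · rintro ⟨⟨hm, hne', -⟩, hqm⟩
        exact ⟨hne', hm, hqm⟩
      · rintro ⟨hne', hm, hqm⟩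
        exact ⟨⟨hm, hne', ⟨q, hqm, hq⟩⟩, hqm⟩
    rw [he, Finset.card_erase_of_mem (Finset.mem_filter.mpr ⟨hℓ, hq⟩), G.point_deg q]
    simp
  have hout : ∀ q ∈ ℓᶜ,
      (((G.lines.filter (fun m => m ≠ ℓ ∧ ∃ r ∈ m, r ∈ ℓ)).filter (fun m => q ∈ m)).card : ℝ)
        = (α : ℝ) := by
    intro q hq
    rw [Finset.mem_compl] at hq
    have he : (G.lines.filter (fun m => m ≠ ℓ ∧ ∃ r ∈ m, r ∈ ℓ)).filter (fun m => q ∈ m)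
        = G.lines.filter (fun m => q ∈ m ∧ ∃ r ∈ m, r ∈ ℓ) := by
      ext m
      simp only [Finset.mem_filter]
      constructor
      · rintro ⟨⟨hm, -, hmeet⟩, hqm⟩
        exact ⟨hm, hqm, hmeet⟩
      · rintro ⟨hm, hqm, hmeet⟩
        exact ⟨⟨hm, fun h => hq (h ▸ hqm), hmeet⟩, hqm⟩
    rw [he, G.alpha_eq ℓ hℓ q hq]
  have e1 : ∑ q ∈ ℓ,
      (((G.lines.filter (fun m => m ≠ ℓ ∧ ∃ r ∈ m, r ∈ ℓ)).filter (fun m => q ∈ m)).card : ℝ) * f q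
      = (t : ℝ) * ∑ q ∈ ℓ, f q := by
    rw [Finset.mul_sum]
    exact Finset.sum_congr rfl fun q hq => by rw [hin q hq]
  have e2 : ∑ q ∈ ℓᶜ,
      (((G.lines.filter (fun m => m ≠ ℓ ∧ ∃ r ∈ m, r ∈ ℓ)).filter (fun m => q ∈ m)).card : ℝ) * f q
      = (α : ℝ) * ∑ q ∈ ℓᶜ, f q := by
    rw [Finset.mul_sum]
    exact Finset.sum_congr rfl fun q hq => by rw [hout q hq]
  have e3 : ∑ q ∈ ℓᶜ, f q = - ∑ q ∈ ℓ, f q := by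
    have h := Finset.sum_add_sum_compl ℓ f
    rw [hf] at h
    linarith
  rw [e1, e2, e3]
  ring

set_option maxHeartbeats 1600000 in
/-- With p the common point of the two highest-weight lines, at most
sα + 2α − s − 2 negative lines pass through p and at most sα − s + 2α − 3
nonnegative lines avoid p. -/
theorem lines_through_intersection_point_bounds {P : Type*} [Fintype P] [DecidableEq P]
    {s t α : ℕ} (hα : 1 < α) (G : PartialGeometry P s t α)
    (ht : (t : ℤ) > s * α + 3 * α - 4)
    (f : P → ℝ) (hf : ∑ p, f p = 0)
    (ℓ₁ ℓ₂ : Finset P) (h1 : ℓ₁ ∈ G.lines) (h2 : ℓ₂ ∈ G.lines) (hne : ℓ₁ ≠ ℓ₂)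
    (hwt1 : ∑ q ∈ ℓ₁, f q = 1)
    (hmax : ∀ m ∈ G.lines, ∑ q ∈ m, f q ≤ 1)
    (hsecond : ∀ m ∈ G.lines, m ≠ ℓ₁ → ∑ q ∈ m, f q ≤ ∑ q ∈ ℓ₂, f q)
    (hfew : (G.lines.filter (fun m => 0 ≤ ∑ q ∈ m, f q)).card ≤ t)
    (hpos : 2 ≤ (G.lines.filter (fun m => 0 < ∑ q ∈ m, f q)).card)
    (p : P) (hp1 : p ∈ ℓ₁) (hp2 : p ∈ ℓ₂) :
    ((G.lines.filter (fun m => p ∈ m ∧ ∑ q ∈ m, f q < 0)).card : ℤ)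
        ≤ s * α + 2 * α - s - 2 ∧
      ((G.lines.filter (fun m => p ∉ m ∧ 0 ≤ ∑ q ∈ m, f q)).card : ℤ)
        ≤ s * α - s + 2 * α - 3 := by
  classical
  -- s ≥ 1
  have hs : 1 ≤ s := by
    rcases Nat.eq_zero_or_pos s with h0 | h; swap
    · exact h
    exfalso
    apply hne
    have e1 : ℓ₁ = {p} := by
      have hc := G.line_size ℓ₁ h1
      rw [h0] at hc
      rcases Finset.card_eq_one.mp hc with ⟨a, ha⟩
      rw [ha] at hp1 ⊢
      rw [Finset.mem_singleton] at hp1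
      rw [hp1]
    have e2 : ℓ₂ = {p} := by
      have hc := G.line_size ℓ₂ h2
      rw [h0] at hc
      rcases Finset.card_eq_one.mp hc with ⟨a, ha⟩
      rw [ha] at hp2 ⊢
      rw [Finset.mem_singleton] at hp2
      rw [hp2]
    rw [e1, e2]
  have hsz : (1 : ℤ) ≤ (s : ℤ) := by exact_mod_cast hs
  have hαz : (2 : ℤ) ≤ (α : ℤ) := by exact_mod_cast hα
  have htz : (2 : ℤ) * α + 1 ≤ (t : ℤ) := by nlinarith
  -- intersection point uniqueness
  have hinter : ∀ q, q ∈ ℓ₁ → q ∈ ℓ₂ → q = p := by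
    intro q hq1 hq2
    by_contra hqp
    have h2pts := G.two_points p q (fun h => hqp (h.symm))
    have hsub : ({ℓ₁, ℓ₂} : Finset (Finset P)) ⊆
        G.lines.filter (fun ℓ => p ∈ ℓ ∧ q ∈ ℓ) := by
      intro m hm
      rw [Finset.mem_insert, Finset.mem_singleton] at hm
      rcases hm with rfl | rfl
      · exact Finset.mem_filter.mpr ⟨h1, hp1, hq1⟩
      · exact Finset.mem_filter.mpr ⟨h2, hp2, hq2⟩
    have := Finset.card_le_card hsub
    rw [Finset.card_pair hne] at this
    omega
  -- key sets
  set A := G.lines.filter (fun m => 0 ≤ ∑ q ∈ m, f q) with hAdef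
  set N₁ := G.lines.filter (fun m => m ≠ ℓ₁ ∧ ∃ q ∈ m, q ∈ ℓ₁) with hN₁def
  set N₂ := G.lines.filter (fun m => m ≠ ℓ₂ ∧ ∃ q ∈ m, q ∈ ℓ₂) with hN₂def
  set K₁ := N₁.filter (fun m => 0 ≤ ∑ q ∈ m, f q) with hK₁def
  set K₂ := N₂.filter (fun m => 0 ≤ ∑ q ∈ m, f q) with hK₂def
  -- second-largest weight facts
  have hw2le1 : ∑ q ∈ ℓ₂, f q ≤ 1 := hmax ℓ₂ h2
  have hw2pos : 0 < ∑ q ∈ ℓ₂, f q := by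
    obtain ⟨m, hm, hmne⟩ := Finset.exists_mem_ne
      (lt_of_lt_of_le one_lt_two hpos) ℓ₁
    rw [Finset.mem_filter] at hm
    exact lt_of_lt_of_le hm.2 (hsecond m hm.1 hmne)
  -- neighbour sums
  have hS1 : ∑ m ∈ N₁, ∑ q ∈ m, f q = (t : ℝ) - α := by
    have h := pg_neighbour_sum G f hf h1
    rw [hwt1] at h
    rw [hN₁def]
    rw [h]; ring
  have hS2 : ∑ m ∈ N₂, ∑ q ∈ m, f q
      = (t : ℝ) * (∑ q ∈ ℓ₂, f q) - (α : ℝ) * (∑ q ∈ ℓ₂, f q) :=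
    pg_neighbour_sum G f hf h2
  -- split of neighbour sums into nonneg and negative parts
  have hsplit1 : ∑ m ∈ K₁, (∑ q ∈ m, f q)
      + ∑ m ∈ N₁.filter (fun m => ¬ 0 ≤ ∑ q ∈ m, f q), (∑ q ∈ m, f q)
      = ∑ m ∈ N₁, ∑ q ∈ m, f q := by
    rw [hK₁def]
    exact Finset.sum_filter_add_sum_filter_not _ _ _
  have hsplit2 : ∑ m ∈ K₂, (∑ q ∈ m, f q)
      + ∑ m ∈ N₂.filter (fun m => ¬ 0 ≤ ∑ q ∈ m, f q), (∑ q ∈ m, f q)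
      = ∑ m ∈ N₂, ∑ q ∈ m, f q := by
    rw [hK₂def]
    exact Finset.sum_filter_add_sum_filter_not _ _ _
  -- membership helpers
  have hK₁mem : ∀ m ∈ K₁, m ∈ G.lines ∧ m ≠ ℓ₁ ∧ 0 ≤ ∑ q ∈ m, f q := by
    intro m hm
    rw [hK₁def, Finset.mem_filter, hN₁def, Finset.mem_filter] at hm
    exact ⟨hm.1.1, hm.1.2.1, hm.2⟩
  have hK₂mem : ∀ m ∈ K₂, m ∈ G.lines ∧ m ≠ ℓ₂ ∧ 0 ≤ ∑ q ∈ m, f q := by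
    intro m hm
    rw [hK₂def, Finset.mem_filter, hN₂def, Finset.mem_filter] at hm
    exact ⟨hm.1.1, hm.1.2.1, hm.2⟩
  -- t lines through p other than ℓ₁ are neighbours of ℓ₁
  have hN₁big : t ≤ N₁.card := by
    have hsub : (G.lines.filter (fun m => p ∈ m)).erase ℓ₁ ⊆ N₁ := by
      intro m hm
      rw [Finset.mem_erase, Finset.mem_filter] at hm
      rw [hN₁def, Finset.mem_filter]
      exact ⟨hm.2.1, hm.1, ⟨p, hm.2.2, hp1⟩⟩
    have h := Finset.card_le_card hsub
    rw [Finset.card_erase_of_mem (Finset.mem_filter.mpr ⟨h1, hp1⟩), G.point_deg p] at h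
    omega
  -- Claim 1 : K₁.card ≥ t - α + 1
  have c1 : (t : ℤ) - α + 1 ≤ (K₁.card : ℤ) := by
    have hsumK : ∑ m ∈ K₁, (∑ q ∈ m, f q) ≤ (K₁.card : ℝ) := by
      have h := Finset.sum_le_card_nsmul K₁ (fun m => ∑ q ∈ m, f q) 1
        (fun m hm => hmax m (hK₁mem m hm).1)
      simpa using h
    by_cases hneg : (N₁.filter (fun m => ¬ 0 ≤ ∑ q ∈ m, f q)).Nonempty
    · have hlt : ∑ m ∈ N₁.filter (fun m => ¬ 0 ≤ ∑ q ∈ m, f q), (∑ q ∈ m, f q) < 0 :=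
        Finset.sum_neg (fun m hm => not_le.mp (Finset.mem_filter.mp hm).2) hneg
      have hr : (t : ℝ) - α < (K₁.card : ℝ) := by
        rw [← hS1, ← hsplit1]
        linarith
      have hi : (t : ℤ) - α < (K₁.card : ℤ) := by exact_mod_cast hr
      omega
    · have hempty : N₁.filter (fun m => ¬ 0 ≤ ∑ q ∈ m, f q) = ∅ :=
        Finset.not_nonempty_iff_eq_empty.mp hneg
      have h := Finset.card_filter_add_card_filter_not
        (s := N₁) (p := fun m => 0 ≤ ∑ q ∈ m, f q)
      rw [hempty, Finset.card_empty] at h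
      rw [← hK₁def] at h
      omega
  -- K₁ sits inside A.erase ℓ₁
  have hl1A : ℓ₁ ∈ A := by
    rw [hAdef, Finset.mem_filter]
    exact ⟨h1, by rw [hwt1]; norm_num⟩
  have hl2A : ℓ₂ ∈ A := by
    rw [hAdef, Finset.mem_filter]
    exact ⟨h2, le_of_lt hw2pos⟩
  have hK₁sub : K₁ ⊆ A.erase ℓ₁ := by
    intro m hm
    obtain ⟨hml, hmne, hmw⟩ := hK₁mem m hm
    exact Finset.mem_erase.mpr ⟨hmne, Finset.mem_filter.mpr ⟨hml, hmw⟩⟩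
  have hAcard : (A.erase ℓ₁).card + 1 = A.card := Finset.card_erase_add_one hl1A
  have cK₁t : (K₁.card : ℤ) ≤ (t : ℤ) - 1 := by
    have h := Finset.card_le_card hK₁sub
    omega
  -- lower bound for w₂
  have w2lb : (t : ℝ) - α ≤ ((t : ℝ) - 1) * (∑ q ∈ ℓ₂, f q) := by
    have hsumK : ∑ m ∈ K₁, (∑ q ∈ m, f q) ≤ (K₁.card : ℝ) * (∑ q ∈ ℓ₂, f q) := by
      have h := Finset.sum_le_card_nsmul K₁ (fun m => ∑ q ∈ m, f q) (∑ q ∈ ℓ₂, f q)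
        (fun m hm => hsecond m (hK₁mem m hm).1 (hK₁mem m hm).2.1)
      simpa [nsmul_eq_mul] using h
    have hnonpos : ∑ m ∈ N₁.filter (fun m => ¬ 0 ≤ ∑ q ∈ m, f q), (∑ q ∈ m, f q) ≤ 0 :=
      Finset.sum_nonpos (fun m hm => le_of_lt (not_le.mp (Finset.mem_filter.mp hm).2))
    have hcard : (K₁.card : ℝ) ≤ (t : ℝ) - 1 := by exact_mod_cast cK₁t
    have hmul : (K₁.card : ℝ) * (∑ q ∈ ℓ₂, f q) ≤ ((t : ℝ) - 1) * (∑ q ∈ ℓ₂, f q) :=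
      mul_le_mul_of_nonneg_right hcard (le_of_lt hw2pos)
    calc (t : ℝ) - α = ∑ m ∈ N₁, ∑ q ∈ m, f q := hS1.symm
      _ = _ + _ := hsplit1.symm
      _ ≤ (K₁.card : ℝ) * (∑ q ∈ ℓ₂, f q) := by linarith
      _ ≤ _ := hmul
  -- ℓ₁ is a nonnegative neighbour of ℓ₂
  have hl1K₂ : ℓ₁ ∈ K₂ := by
    rw [hK₂def, Finset.mem_filter, hN₂def, Finset.mem_filter]
    exact ⟨⟨h1, hne, ⟨p, hp1, hp2⟩⟩, by rw [hwt1]; norm_num⟩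
  -- Claim 2 : K₂.card ≥ t - α
  have c2 : (t : ℤ) - α ≤ (K₂.card : ℤ) := by
    by_contra hc
    push_neg at hc
    have hcr : (K₂.card : ℝ) ≤ (t : ℝ) - α - 1 := by
      have : (K₂.card : ℤ) ≤ (t : ℤ) - α - 1 := by omega
      exact_mod_cast this
    have herase : ∑ m ∈ K₂.erase ℓ₁, (∑ q ∈ m, f q)
        ≤ ((K₂.erase ℓ₁).card : ℝ) * (∑ q ∈ ℓ₂, f q) := by
      have h := Finset.sum_le_card_nsmul (K₂.erase ℓ₁) (fun m => ∑ q ∈ m, f q)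
        (∑ q ∈ ℓ₂, f q)
        (fun m hm => hsecond m (hK₂mem m (Finset.mem_of_mem_erase hm)).1
          (Finset.mem_erase.mp hm).1)
      simpa [nsmul_eq_mul] using h
    have hcerase : ((K₂.erase ℓ₁).card : ℝ) = (K₂.card : ℝ) - 1 := by
      rw [Finset.card_erase_of_mem hl1K₂]
      have : 1 ≤ K₂.card := Finset.card_pos.mpr ⟨ℓ₁, hl1K₂⟩
      push_cast [Nat.cast_sub this]
      ring
    have hadd : (1 : ℝ) + ∑ m ∈ K₂.erase ℓ₁, (∑ q ∈ m, f q) = ∑ m ∈ K₂, (∑ q ∈ m, f q) := by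
      have h := Finset.add_sum_erase K₂ (fun m => ∑ q ∈ m, f q) hl1K₂
      simpa only [hwt1] using h
    have hnonpos : ∑ m ∈ N₂.filter (fun m => ¬ 0 ≤ ∑ q ∈ m, f q), (∑ q ∈ m, f q) ≤ 0 :=
      Finset.sum_nonpos (fun m hm => le_of_lt (not_le.mp (Finset.mem_filter.mp hm).2))
    rw [hcerase] at herase
    -- combine: (t-α) w₂ ≤ 1 + (K₂.card-1) w₂
    have hkey : (t : ℝ) * (∑ q ∈ ℓ₂, f q) - (α : ℝ) * (∑ q ∈ ℓ₂, f q)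
        ≤ 1 + ((K₂.card : ℝ) - 1) * (∑ q ∈ ℓ₂, f q) := by
      rw [← hS2, ← hsplit2]
      linarith
    have hmul : ((K₂.card : ℝ) - 1) * (∑ q ∈ ℓ₂, f q)
        ≤ ((t : ℝ) - α - 2) * (∑ q ∈ ℓ₂, f q) :=
      mul_le_mul_of_nonneg_right (by linarith) (le_of_lt hw2pos)
    have h2w : 2 * (∑ q ∈ ℓ₂, f q) ≤ 1 := by nlinarith [hkey, hmul]
    have htr : (2 : ℝ) * α + 1 ≤ (t : ℝ) := by exact_mod_cast htz
    have hmul2 : ((t : ℝ) - 1) * (2 * (∑ q ∈ ℓ₂, f q)) ≤ ((t : ℝ) - 1) * 1 :=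
      mul_le_mul_of_nonneg_left h2w (by nlinarith : (0:ℝ) ≤ (t:ℝ) - 1)
    nlinarith [w2lb, hmul2, htr]
  -- B₀ : lines avoiding p meeting both ℓ₁ and ℓ₂
  set B₀ := G.lines.filter (fun m => p ∉ m ∧ (∃ q ∈ m, q ∈ ℓ₁) ∧ (∃ q ∈ m, q ∈ ℓ₂))
    with hB₀def
  have hB₀ : B₀.card ≤ s * (α - 1) := by
    have hsub : B₀ ⊆ (ℓ₁.erase p).biUnion
        (fun q => (G.lines.filter (fun m => q ∈ m ∧ ∃ r ∈ m, r ∈ ℓ₂)).erase ℓ₁) := by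
      intro m hm
      rw [hB₀def, Finset.mem_filter] at hm
      obtain ⟨hml, hpm, ⟨q, hqm, hq1⟩, hm2⟩ := hm
      refine Finset.mem_biUnion.mpr ⟨q, ?_, ?_⟩
      · exact Finset.mem_erase.mpr ⟨fun h => hpm (h ▸ hqm), hq1⟩
      · refine Finset.mem_erase.mpr ⟨?_, Finset.mem_filter.mpr ⟨hml, hqm, hm2⟩⟩
        intro h
        exact hpm (by rw [h]; exact hp1)
    have hcards : ∀ q ∈ ℓ₁.erase p,
        ((G.lines.filter (fun m => q ∈ m ∧ ∃ r ∈ m, r ∈ ℓ₂)).erase ℓ₁).card = α - 1 := by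
      intro q hq
      rw [Finset.mem_erase] at hq
      have hq2 : q ∉ ℓ₂ := fun h => hq.1 (hinter q hq.2 h)
      have hmem : ℓ₁ ∈ G.lines.filter (fun m => q ∈ m ∧ ∃ r ∈ m, r ∈ ℓ₂) :=
        Finset.mem_filter.mpr ⟨h1, hq.2, ⟨p, hp1, hp2⟩⟩
      rw [Finset.card_erase_of_mem hmem, G.alpha_eq ℓ₂ h2 q hq2]
    calc B₀.card ≤ _ := Finset.card_le_card hsub
      _ ≤ ∑ q ∈ ℓ₁.erase p,
            ((G.lines.filter (fun m => q ∈ m ∧ ∃ r ∈ m, r ∈ ℓ₂)).erase ℓ₁).card :=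
          Finset.card_biUnion_le
      _ = ∑ _q ∈ ℓ₁.erase p, (α - 1) := Finset.sum_congr rfl hcards
      _ = s * (α - 1) := by
          rw [Finset.sum_const, Finset.card_erase_of_mem hp1, G.line_size ℓ₁ h1,
            smul_eq_mul, Nat.add_sub_cancel]
  have hB₀z : (B₀.card : ℤ) ≤ (s : ℤ) * α - s := by
    calc (B₀.card : ℤ) ≤ ((s * (α - 1) : ℕ) : ℤ) := by exact_mod_cast hB₀
      _ = (s : ℤ) * α - s := by
          rw [Nat.cast_mul, Nat.cast_sub hα.le]
          push_cast
          ring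
  -- M₁ : nonnegative lines disjoint from ℓ₁ ; M₂ likewise for ℓ₂
  set M₁ := A.filter (fun m => m ≠ ℓ₁ ∧ ¬ ∃ q ∈ m, q ∈ ℓ₁) with hM₁def
  set M₂ := A.filter (fun m => m ≠ ℓ₂ ∧ ¬ ∃ q ∈ m, q ∈ ℓ₂) with hM₂def
  have hM₁z : (M₁.card : ℤ) ≤ (α : ℤ) - 2 := by
    have hdisj : Disjoint K₁ M₁ := by
      rw [Finset.disjoint_left]
      intro m hm₁ hm₂
      rw [hM₁def, Finset.mem_filter] at hm₂
      rw [hK₁def, Finset.mem_filter, hN₁def, Finset.mem_filter] at hm₁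
      exact hm₂.2.2 hm₁.1.2.2
    have hsub : K₁ ∪ M₁ ⊆ A.erase ℓ₁ := by
      intro m hm
      rcases Finset.mem_union.mp hm with hm | hm
      · exact hK₁sub hm
      · rw [hM₁def, Finset.mem_filter] at hm
        exact Finset.mem_erase.mpr ⟨hm.2.1, hm.1⟩
    have h := Finset.card_le_card hsub
    rw [Finset.card_union_of_disjoint hdisj] at h
    omega
  have hK₂sub : K₂ ⊆ A.erase ℓ₂ := by
    intro m hm
    obtain ⟨hml, hmne, hmw⟩ := hK₂mem m hm
    exact Finset.mem_erase.mpr ⟨hmne, Finset.mem_filter.mpr ⟨hml, hmw⟩⟩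
  have hA₂card : (A.erase ℓ₂).card + 1 = A.card := Finset.card_erase_add_one hl2A
  have hM₂z : (M₂.card : ℤ) ≤ (α : ℤ) - 1 := by
    have hdisj : Disjoint K₂ M₂ := by
      rw [Finset.disjoint_left]
      intro m hm₁ hm₂
      rw [hM₂def, Finset.mem_filter] at hm₂
      rw [hK₂def, Finset.mem_filter, hN₂def, Finset.mem_filter] at hm₁
      exact hm₂.2.2 hm₁.1.2.2
    have hsub : K₂ ∪ M₂ ⊆ A.erase ℓ₂ := by
      intro m hm
      rcases Finset.mem_union.mp hm with hm | hm
      · exact hK₂sub hm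
      · rw [hM₂def, Finset.mem_filter] at hm
        exact Finset.mem_erase.mpr ⟨hm.2.1, hm.1⟩
    have h := Finset.card_le_card hsub
    rw [Finset.card_union_of_disjoint hdisj] at h
    omega
  -- second goal : nonnegative lines avoiding p
  have hBsub : G.lines.filter (fun m => p ∉ m ∧ 0 ≤ ∑ q ∈ m, f q) ⊆ B₀ ∪ (M₁ ∪ M₂) := by
    intro m hm
    rw [Finset.mem_filter] at hm
    obtain ⟨hml, hpm, hwm⟩ := hm
    have hmA : m ∈ A := by
      rw [hAdef]
      exact Finset.mem_filter.mpr ⟨hml, hwm⟩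
    have hne1 : m ≠ ℓ₁ := fun h => hpm (by rw [h]; exact hp1)
    have hne2 : m ≠ ℓ₂ := fun h => hpm (by rw [h]; exact hp2)
    by_cases e1 : ∃ q ∈ m, q ∈ ℓ₁
    · by_cases e2 : ∃ q ∈ m, q ∈ ℓ₂
      · refine Finset.mem_union_left _ ?_
        rw [hB₀def]
        exact Finset.mem_filter.mpr ⟨hml, hpm, e1, e2⟩
      · refine Finset.mem_union_right _ (Finset.mem_union_right _ ?_)
        rw [hM₂def]
        exact Finset.mem_filter.mpr ⟨hmA, hne2, e2⟩
    · refine Finset.mem_union_right _ (Finset.mem_union_left _ ?_)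
      rw [hM₁def]
      exact Finset.mem_filter.mpr ⟨hmA, hne1, e1⟩
  have goal2 : ((G.lines.filter (fun m => p ∉ m ∧ 0 ≤ ∑ q ∈ m, f q)).card : ℤ)
      ≤ (s : ℤ) * α - s + 2 * α - 3 := by
    have h := Finset.card_le_card hBsub
    have h2 := Finset.card_union_le B₀ (M₁ ∪ M₂)
    have h3 := Finset.card_union_le M₁ M₂
    have hc : ((G.lines.filter (fun m => p ∉ m ∧ 0 ≤ ∑ q ∈ m, f q)).card : ℤ)
        ≤ (B₀.card : ℤ) + (M₁.card + M₂.card) := by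
      have : (G.lines.filter (fun m => p ∉ m ∧ 0 ≤ ∑ q ∈ m, f q)).card
          ≤ B₀.card + (M₁.card + M₂.card) := by omega
      exact_mod_cast this
    linarith [hB₀z, hM₁z, hM₂z]
  -- first goal : negative lines through p
  have hpart : (G.lines.filter (fun m => p ∈ m ∧ 0 ≤ ∑ q ∈ m, f q)).card
      + (G.lines.filter (fun m => p ∈ m ∧ ∑ q ∈ m, f q < 0)).card = t + 1 := by
    have e : (G.lines.filter (fun m => p ∈ m ∧ ∑ q ∈ m, f q < 0))
        = (G.lines.filter (fun m => p ∈ m)).filter (fun m => ¬ 0 ≤ ∑ q ∈ m, f q) := by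
      rw [Finset.filter_filter]
      apply Finset.filter_congr
      intro m _
      simp [not_le]
    have e2 : (G.lines.filter (fun m => p ∈ m ∧ 0 ≤ ∑ q ∈ m, f q))
        = (G.lines.filter (fun m => p ∈ m)).filter (fun m => 0 ≤ ∑ q ∈ m, f q) := by
      rw [Finset.filter_filter]
    rw [e, e2, Finset.card_filter_add_card_filter_not, G.point_deg p]
  have hK₁split : (K₁.filter (fun m => p ∈ m)).card
      + (K₁.filter (fun m => ¬ p ∈ m)).card = K₁.card :=
    Finset.card_filter_add_card_filter_not (p := fun m => p ∈ m)
  have hK₁np : (K₁.filter (fun m => ¬ p ∈ m)) ⊆ B₀ ∪ M₂ := by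
    intro m hm
    rw [Finset.mem_filter] at hm
    obtain ⟨hmK, hpm⟩ := hm
    obtain ⟨hml, hne1, hwm⟩ := hK₁mem m hmK
    have hmeet1 : ∃ q ∈ m, q ∈ ℓ₁ := by
      rw [hK₁def, Finset.mem_filter, hN₁def, Finset.mem_filter] at hmK
      exact hmK.1.2.2
    have hmA : m ∈ A := by
      rw [hAdef]
      exact Finset.mem_filter.mpr ⟨hml, hwm⟩
    have hne2 : m ≠ ℓ₂ := fun h => hpm (by rw [h]; exact hp2)
    by_cases e2 : ∃ q ∈ m, q ∈ ℓ₂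
    · refine Finset.mem_union_left _ ?_
      rw [hB₀def]
      exact Finset.mem_filter.mpr ⟨hml, hpm, hmeet1, e2⟩
    · refine Finset.mem_union_right _ ?_
      rw [hM₂def]
      exact Finset.mem_filter.mpr ⟨hmA, hne2, e2⟩
  have hK₁npz : ((K₁.filter (fun m => ¬ p ∈ m)).card : ℤ) ≤ (B₀.card : ℤ) + M₂.card := by
    have h := Finset.card_le_card hK₁np
    have h2 := Finset.card_union_le B₀ M₂
    have : (K₁.filter (fun m => ¬ p ∈ m)).card ≤ B₀.card + M₂.card := by omega
    exact_mod_cast this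
  have hTpos : (K₁.filter (fun m => p ∈ m)).card + 1
      ≤ (G.lines.filter (fun m => p ∈ m ∧ 0 ≤ ∑ q ∈ m, f q)).card := by
    have hsub : insert ℓ₁ (K₁.filter (fun m => p ∈ m))
        ⊆ G.lines.filter (fun m => p ∈ m ∧ 0 ≤ ∑ q ∈ m, f q) := by
      intro m hm
      rcases Finset.mem_insert.mp hm with rfl | hm
      · exact Finset.mem_filter.mpr ⟨h1, hp1, by rw [hwt1]; norm_num⟩
      · rw [Finset.mem_filter] at hm
        obtain ⟨hml, hne1, hwm⟩ := hK₁mem m hm.1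
        exact Finset.mem_filter.mpr ⟨hml, hm.2, hwm⟩
    have h := Finset.card_le_card hsub
    rw [Finset.card_insert_of_notMem
      (fun h => (hK₁mem ℓ₁ (Finset.mem_filter.mp h).1).2.1 rfl)] at h
    omega
  refine ⟨?_, goal2⟩
  have hpartz : ((G.lines.filter (fun m => p ∈ m ∧ 0 ≤ ∑ q ∈ m, f q)).card : ℤ)
      + ((G.lines.filter (fun m => p ∈ m ∧ ∑ q ∈ m, f q < 0)).card : ℤ) = (t : ℤ) + 1 := by
    exact_mod_cast hpart
  have hK₁splitz : ((K₁.filter (fun m => p ∈ m)).card : ℤ)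
      + ((K₁.filter (fun m => ¬ p ∈ m)).card : ℤ) = (K₁.card : ℤ) := by
    exact_mod_cast hK₁split
  have hTposz : ((K₁.filter (fun m => p ∈ m)).card : ℤ) + 1
      ≤ ((G.lines.filter (fun m => p ∈ m ∧ 0 ≤ ∑ q ∈ m, f q)).card : ℤ) := by
    exact_mod_cast hTpos
  linarith [c1, hB₀z, hM₂z, hK₁npz, hpartz, hK₁splitz, hTposz]
end
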